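/- arXiv:2501.14632 — 13 statements merged into one kernel-verified Lean document; each statement's English description precedes it below -/
import Mathlib

section
/- Let (R_i)_{i ∈ I} be a family of rings and let R = ∏_{i ∈ I} R_i be their direct product. Then R is an SDT ring if and only if R_i is an SDT ring for every i ∈ I. -/
/-- `Δ(R) = {x ∈ R : x + u ∈ U(R) for every u ∈ U(R)}`. -/
def Delta (R : Type*) [Ring R] : Set R :=
  {x : R | ∀ u : R, IsUnit u → IsUnit (x + u)}

/-- A ring `R` is a strongly Δ tripotent (SDT) ring if every `a ∈ R` can be written
`a = e + d` with `e³ = e`, `d ∈ Δ(R)` and `ed = de`. -/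
def IsSDTRing (R : Type*) [Ring R] : Prop :=
  ∀ a : R, ∃ e d : R, e ^ 3 = e ∧ d ∈ Delta R ∧ e * d = d * e ∧ a = e + d

lemma pi_isUnit_iff {I : Type*} {R : I → Type*} [∀ i, Monoid (R i)] (x : ∀ i, R i) :
    IsUnit x ↔ ∀ i, IsUnit (x i) := by
  constructor
  · rintro ⟨u, rfl⟩ i
    exact ⟨⟨u.val i, u.inv i, congrFun u.val_inv i, congrFun u.inv_val i⟩, rfl⟩
  · intro h
    have h' : ∀ i, ∃ b, x i * b = 1 ∧ b * x i = 1 := by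
      intro i
      rcases h i with ⟨u, hu⟩
      exact ⟨u.inv, by rw [← hu]; exact u.val_inv, by rw [← hu]; exact u.inv_val⟩
    choose y hy hy' using h'
    exact ⟨⟨x, y, funext hy, funext hy'⟩, rfl⟩

lemma pi_mem_delta_iff {I : Type*} {R : I → Type*} [∀ i, Ring (R i)] (x : ∀ i, R i) :
    x ∈ Delta (∀ i, R i) ↔ ∀ i, x i ∈ Delta (R i) := by
  classical
  constructor
  · intro hx i u hu
    set v : ∀ j, R j := Function.update (1 : ∀ j, R j) i u with hv
    have hvunit : IsUnit v := by
      rw [pi_isUnit_iff]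
      intro j
      by_cases hj : j = i
      · subst hj; simpa [hv] using hu
      · simp [hv, Function.update_of_ne hj]
    have := hx v hvunit
    rw [pi_isUnit_iff] at this
    have := this i
    simpa [hv] using this
  · intro hx u hu
    rw [pi_isUnit_iff] at hu ⊢
    intro i
    exact hx i (u i) (hu i)

theorem product_isSDT_iff {I : Type*} (R : I → Type*) [∀ i, Ring (R i)] :
    IsSDTRing (∀ i, R i) ↔ ∀ i, IsSDTRing (R i) := by
  classical
  constructor
  · intro h i a
    obtain ⟨e, d, he, hd, hcomm, heq⟩ := h (Function.update (0 : ∀ j, R j) i a)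
    refine ⟨e i, d i, ?_, (pi_mem_delta_iff d).mp hd i, congrFun hcomm i, ?_⟩
    · exact congrFun he i
    · have := congrFun heq i
      simpa using this
  · intro h a
    choose e d he hd hcomm heq using fun i => h i (a i)
    exact ⟨e, d, funext he, (pi_mem_delta_iff d).mpr hd, funext hcomm, funext heq⟩
end

section
/- Let R be an SDT ring and let I be a (two-sided) ideal of R with I ⊆ J(R), where J(R) is the Jacobson radical of R. Then the quotient ring R/I is an SDT ring. -/
private lemma left_inv_of_mem_jac {R : Type*} [Ring R] {x : R}
    (hx : x ∈ TwoSidedIdeal.jacobson (⊥ : TwoSidedIdeal R)) :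
    ∃ z : R, z * (1 + x) = 1 ∧ z - 1 ∈ TwoSidedIdeal.jacobson (⊥ : TwoSidedIdeal R) := by
  obtain ⟨z, hz⟩ := (TwoSidedIdeal.mem_jacobson_iff.1 hx) 1
  rw [TwoSidedIdeal.mem_bot] at hz
  have h1 : z * (1 + x) = 1 := by
    have h' : z * 1 * x + z - 1 = 0 := hz
    rw [mul_one] at h'
    have h2 : z * x + z = 1 := eq_of_sub_eq_zero h'
    rw [mul_add, mul_one, add_comm]
    exact h2
  refine ⟨z, h1, ?_⟩
  have h' : z * 1 * x + z - 1 = 0 := hz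
  rw [mul_one] at h'
  have h2 : z * x + z = 1 := eq_of_sub_eq_zero h'
  have : z - 1 = -(z * x) := by rw [← h2]; abel
  rw [this]
  exact ((TwoSidedIdeal.jacobson ⊥).neg_mem
    ((TwoSidedIdeal.jacobson ⊥).mul_mem_left z x hx))

private lemma isUnit_one_add_of_mem_jac {R : Type*} [Ring R] {x : R}
    (hx : x ∈ TwoSidedIdeal.jacobson (⊥ : TwoSidedIdeal R)) : IsUnit (1 + x) := by
  obtain ⟨z, hz1, hz2⟩ := left_inv_of_mem_jac hx
  obtain ⟨w, hw1, _⟩ := left_inv_of_mem_jac hz2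
  have hwz : w * z = 1 := by rwa [add_sub_cancel] at hw1
  have hweq : w = 1 + x := by
    calc w = w * (z * (1 + x)) := by rw [hz1, mul_one]
    _ = (w * z) * (1 + x) := by rw [mul_assoc]
    _ = 1 + x := by rw [hwz, one_mul]
  exact ⟨⟨1 + x, z, by rw [← hweq]; exact hwz, hz1⟩, rfl⟩

private lemma isUnit_of_mul_both {R : Type*} [Ring R] {a b : R}
    (h1 : IsUnit (a * b)) (h2 : IsUnit (b * a)) : IsUnit a := by
  obtain ⟨u, hu⟩ := h1
  obtain ⟨v, hv⟩ := h2
  have hr : a * (b * ↑u⁻¹) = 1 := by rw [← mul_assoc, ← hu, u.mul_inv]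
  have hl : (↑v⁻¹ * b) * a = 1 := by rw [mul_assoc, ← hv, v.inv_mul]
  have hle : ↑v⁻¹ * b = b * ↑u⁻¹ := by
    calc ↑v⁻¹ * b = (↑v⁻¹ * b) * (a * (b * ↑u⁻¹)) := by rw [hr, mul_one]
    _ = ((↑v⁻¹ * b) * a) * (b * ↑u⁻¹) := by simp [mul_assoc]
    _ = b * ↑u⁻¹ := by rw [hl, one_mul]
  exact ⟨⟨a, b * ↑u⁻¹, hr, by rw [← hle]; exact hl⟩, rfl⟩

theorem quotient_isSDT {R : Type*} [Ring R] (hR : IsSDTRing R) (I : TwoSidedIdeal R)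
    (hI : ∀ x ∈ I, x ∈ TwoSidedIdeal.jacobson (⊥ : TwoSidedIdeal R)) :
    IsSDTRing I.ringCon.Quotient := by
  set f := I.ringCon.mk' with hf
  have hsurj : Function.Surjective f := fun q => Quotient.inductionOn' q fun x => ⟨x, rfl⟩
  -- units lift
  have hlift : ∀ q : I.ringCon.Quotient, IsUnit q → ∃ u : R, IsUnit u ∧ f u = q := by
    intro q hq
    obtain ⟨u0, hu0⟩ := hsurj q
    obtain ⟨w, hw⟩ := hq
    obtain ⟨v0, hv0⟩ := hsurj (↑w⁻¹ : I.ringCon.Quotient)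
    have huv : f (u0 * v0) = 1 := by
      rw [map_mul, hu0, hv0, ← hw, w.mul_inv]
    have hvu : f (v0 * u0) = 1 := by
      rw [map_mul, hu0, hv0, ← hw, w.inv_mul]
    have hmem : ∀ {a : R}, f a = 1 → a - 1 ∈ I := by
      intro a ha
      rw [← TwoSidedIdeal.rel_iff]
      exact I.ringCon.eq.mp (show (a : I.ringCon.Quotient) = (1 : R) from ha)
    have h1 : IsUnit (u0 * v0) := by
      have := isUnit_one_add_of_mem_jac (hI _ (hmem huv))
      rwa [add_sub_cancel] at this
    have h2 : IsUnit (v0 * u0) := by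
      have := isUnit_one_add_of_mem_jac (hI _ (hmem hvu))
      rwa [add_sub_cancel] at this
    exact ⟨u0, isUnit_of_mul_both h1 h2, hu0⟩
  -- Delta maps
  have hdelta : ∀ d : R, d ∈ Delta R → f d ∈ Delta I.ringCon.Quotient := by
    intro d hd q hq
    obtain ⟨u, hu, rfl⟩ := hlift q hq
    have := hd u hu
    have := this.map f
    rwa [map_add] at this
  intro a
  obtain ⟨x, rfl⟩ := hsurj a
  obtain ⟨e, d, he, hd, hcomm, hx⟩ := hR x
  exact ⟨f e, f d, by rw [← map_pow, he], hdelta d hd,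
    by rw [← map_mul, ← map_mul, hcomm], by rw [hx, map_add]⟩
end

section
/- Let R be a ring. For every e ∈ R with e³ = e and every d ∈ Δ(R), the elements (e + e²)d, (e − e²)d, d(e + e²), d(e − e²), 2e²d, and 2ed all belong to Δ(R). -/
lemma delta_add {R : Type*} [Ring R] {x y : R} (hx : x ∈ Delta R) (hy : y ∈ Delta R) :
    x + y ∈ Delta R := by
  intro u hu
  have := hy u hu
  rw [add_assoc]
  exact hx _ this

lemma delta_neg {R : Type*} [Ring R] {x : R} (hx : x ∈ Delta R) : -x ∈ Delta R := by
  intro u hu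
  have h := hx (-u) hu.neg
  have : -x + u = -(x + -u) := by abel
  rw [this]
  exact h.neg

lemma delta_unit_mul {R : Type*} [Ring R] {v x : R} (hv : IsUnit v) (hx : x ∈ Delta R) :
    v * x ∈ Delta R := by
  obtain ⟨v, rfl⟩ := hv
  intro u hu
  have h := hx _ (((v⁻¹ : Rˣ).isUnit).mul hu)
  have heq : (v : R) * x + u = v * (x + ↑v⁻¹ * u) := by
    rw [mul_add, ← mul_assoc]
    simp
  rw [heq]
  exact v.isUnit.mul h

lemma delta_mul_unit {R : Type*} [Ring R] {v x : R} (hv : IsUnit v) (hx : x ∈ Delta R) :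
    x * v ∈ Delta R := by
  obtain ⟨v, rfl⟩ := hv
  intro u hu
  have h := hx _ (hu.mul ((v⁻¹ : Rˣ).isUnit))
  have heq : x * v + u = (x + u * ↑v⁻¹) * v := by
    rw [add_mul, mul_assoc]
    simp
  rw [heq]
  exact h.mul v.isUnit

theorem tripotent_mul_delta_mem_delta {R : Type*} [Ring R] (e d : R)
    (he : e ^ 3 = e) (hd : d ∈ Delta R) :
    (e + e ^ 2) * d ∈ Delta R ∧ (e - e ^ 2) * d ∈ Delta R ∧
    d * (e + e ^ 2) ∈ Delta R ∧ d * (e - e ^ 2) ∈ Delta R ∧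
    2 * e ^ 2 * d ∈ Delta R ∧ 2 * e * d ∈ Delta R := by
  have hvsq : (e + e ^ 2 - 1) * (e + e ^ 2 - 1) = 1 := by
    linear_combination (norm := noncomm_ring) (2 : R) * he + e * he
  have hv : IsUnit (e + e ^ 2 - 1) := ⟨⟨_, _, hvsq, hvsq⟩, rfl⟩
  have hwsq : (e ^ 2 - e - 1) * (e ^ 2 - e - 1) = 1 := by
    linear_combination (norm := noncomm_ring) e * he - (2 : R) * he
  have hw : IsUnit (e ^ 2 - e - 1) := ⟨⟨_, _, hwsq, hwsq⟩, rfl⟩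
  have h1 : (e + e ^ 2) * d ∈ Delta R := by
    have heq : (e + e ^ 2) * d = (e + e ^ 2 - 1) * d + d := by noncomm_ring
    rw [heq]; exact delta_add (delta_unit_mul hv hd) hd
  have h2 : (e - e ^ 2) * d ∈ Delta R := by
    have heq : (e - e ^ 2) * d = -((e ^ 2 - e - 1) * d) + -d := by noncomm_ring
    rw [heq]; exact delta_add (delta_neg (delta_unit_mul hw hd)) (delta_neg hd)
  have h3 : d * (e + e ^ 2) ∈ Delta R := by
    have heq : d * (e + e ^ 2) = d * (e + e ^ 2 - 1) + d := by noncomm_ring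
    rw [heq]; exact delta_add (delta_mul_unit hv hd) hd
  have h4 : d * (e - e ^ 2) ∈ Delta R := by
    have heq : d * (e - e ^ 2) = -(d * (e ^ 2 - e - 1)) + -d := by noncomm_ring
    rw [heq]; exact delta_add (delta_neg (delta_mul_unit hw hd)) (delta_neg hd)
  have h5 : 2 * e ^ 2 * d ∈ Delta R := by
    have heq : 2 * e ^ 2 * d = (e + e ^ 2) * d + -((e - e ^ 2) * d) := by noncomm_ring
    rw [heq]; exact delta_add h1 (delta_neg h2)
  have h6 : 2 * e * d ∈ Delta R := by
    have heq : 2 * e * d = (e + e ^ 2) * d + (e - e ^ 2) * d := by noncomm_ring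
    rw [heq]; exact delta_add h1 h2
  exact ⟨h1, h2, h3, h4, h5, h6⟩
end

section
/- Let R be a nontrivial ring. Then the polynomial ring R[x] is not an SDT ring. -/
open Polynomial

private lemma X_mul_cancel' {R : Type*} [Ring R] {p q : R[X]}
    (h : (X : R[X]) * p = X * q) : p = q := by
  ext n
  have := congrArg (fun f : R[X] => f.coeff (n + 1)) h
  simpa [Polynomial.coeff_X_mul] using this

private lemma eq_zero_of_self_eq_X_sq_mul_cube {R : Type*} [Ring R] {g : R[X]}
    (h : g = X ^ 2 * g ^ 3) : g = 0 := by
  have key : ∀ k : ℕ, ∃ r : R[X], g = X ^ k * r := by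
    intro k
    induction k with
    | zero => exact ⟨g, by simp⟩
    | succ k ih =>
      obtain ⟨r, hr⟩ := ih
      refine ⟨X ^ (2 * k + 1) * r ^ 3, ?_⟩
      have hc : Commute (X ^ k : R[X]) r := (Polynomial.commute_X r).pow_left k
      have h3 : g ^ 3 = X ^ (3 * k) * r ^ 3 := by
        rw [hr, hc.mul_pow, ← pow_mul, mul_comm k 3]
      calc g = X ^ 2 * g ^ 3 := h
        _ = X ^ 2 * (X ^ (3 * k) * r ^ 3) := by rw [h3]
        _ = X ^ (k + 1) * (X ^ (2 * k + 1) * r ^ 3) := by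
            rw [← mul_assoc, ← pow_add, ← mul_assoc, ← pow_add]
            ring_nf
  ext n
  obtain ⟨r, hr⟩ := key (n + 1)
  have hcomm : (X : R[X]) ^ (n + 1) * r = r * X ^ (n + 1) :=
    ((Polynomial.commute_X r).pow_left (n + 1)).eq
  rw [hr, hcomm, Polynomial.coeff_mul_X_pow']
  simp

private lemma not_isUnit_X_add_one {R : Type*} [Ring R] [Nontrivial R] :
    ¬ IsUnit ((X : R[X]) + 1) := by
  intro h
  obtain ⟨u, hu⟩ := h
  have hmul : ((X : R[X]) + 1) * ↑u⁻¹ = 1 := by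
    have := u.mul_inv
    rwa [hu] at this
  set v : R[X] := ↑u⁻¹ with hv
  have hvne : v ≠ 0 := by
    intro h0
    rw [h0, mul_zero] at hmul
    exact one_ne_zero hmul.symm
  have hc : (((X : R[X]) + 1) * v).coeff (v.natDegree + 1)
      = v.coeff v.natDegree + v.coeff (v.natDegree + 1) := by
    rw [add_mul, one_mul, Polynomial.coeff_add, Polynomial.coeff_X_mul]
  rw [hmul, Polynomial.coeff_eq_zero_of_natDegree_lt (Nat.lt_succ_self _), add_zero] at hc
  have h1 : (1 : R[X]).coeff (v.natDegree + 1) = 0 := by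
    simp [Polynomial.coeff_one]
  rw [h1] at hc
  exact (Polynomial.leadingCoeff_ne_zero.mpr hvne) hc.symm

theorem polynomial_not_isSDT (R : Type*) [Ring R] [Nontrivial R] :
    ¬ IsSDTRing (Polynomial R) := by
  intro h
  obtain ⟨e, d, he, hd, hcomm, hX⟩ := h Polynomial.X
  set t : R[X] := X - e with ht
  have hdt : d = t := by rw [ht, hX]; abel
  have h1 : IsUnit (t + 1) := by rw [← hdt]; exact hd 1 isUnit_one
  have h2 : IsUnit (t - 1) := by
    rw [← hdt]
    have := hd (-1) isUnit_one.neg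
    simpa [sub_eq_add_neg] using this
  -- `X` divides `t ^ 3 - t`
  have hπe : (Polynomial.constantCoeff e) ^ 3 = Polynomial.constantCoeff e := by
    have := congrArg Polynomial.constantCoeff he
    rwa [map_pow] at this
  have hπ : (t ^ 3 - t).coeff 0 = 0 := by
    have hcc : Polynomial.constantCoeff (t ^ 3 - t) = 0 := by
      rw [map_sub, map_pow, ht, map_sub]
      simp only [Polynomial.constantCoeff_apply, Polynomial.coeff_X_zero, zero_sub]
      rw [Odd.neg_pow ⟨1, by norm_num⟩]
      rw [show (e.coeff 0) ^ 3 = (Polynomial.constantCoeff e) ^ 3 from rfl, hπe]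
      simp [Polynomial.constantCoeff_apply]
    simpa [Polynomial.constantCoeff_apply] using hcc
  obtain ⟨Q, hQ⟩ := Polynomial.X_dvd_iff.mpr hπ
  have hfact : (t - 1) * t * (t + 1) = t ^ 3 - t := by noncomm_ring
  obtain ⟨u1, hu1⟩ := h2
  obtain ⟨u2, hu2⟩ := h1
  set w1 : R[X] := ↑u1⁻¹ with hw1
  set w2 : R[X] := ↑u2⁻¹ with hw2
  have h1' : w1 * (t - 1) = 1 := by rw [hw1, ← hu1]; exact u1.inv_mul
  have h2' : (t + 1) * w2 = 1 := by rw [hw2, ← hu2]; exact u2.mul_inv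
  have hts : t = w1 * (X * Q) * w2 := by
    calc t = (w1 * (t - 1)) * t * ((t + 1) * w2) := by rw [h1', h2', one_mul, mul_one]
      _ = w1 * ((t - 1) * t * (t + 1)) * w2 := by simp only [mul_assoc]
      _ = w1 * (X * Q) * w2 := by rw [hfact, hQ]
  have ht0 : t = X * (w1 * Q * w2) := by
    rw [hts, show w1 * (X * Q) = X * (w1 * Q) from by
      rw [← mul_assoc, ← Polynomial.X_mul, mul_assoc], mul_assoc, mul_assoc]
  set g : R[X] := 1 - w1 * Q * w2 with hg
  have heg : e = X * g := by
    have he' : e = X - t := by rw [ht]; abel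
    rw [he', hg, mul_sub, mul_one]
    rw [ht0]
  -- tripotency forces `g = 0`
  have hgc : Commute (X : R[X]) g := Polynomial.commute_X g
  have hXg : X * (X ^ 2 * g ^ 3) = X * g := by
    calc X * (X ^ 2 * g ^ 3) = X ^ 3 * g ^ 3 := by rw [← mul_assoc, ← pow_succ']
      _ = (X * g) ^ 3 := (hgc.mul_pow 3).symm
      _ = X * g := by rw [← heg]; exact he
  have hg0 : g = 0 := eq_zero_of_self_eq_X_sq_mul_cube (X_mul_cancel' hXg).symm
  have he0 : e = 0 := by rw [heg, hg0, mul_zero]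
  have htX : t = X := by rw [ht, he0, sub_zero]
  rw [htX] at hu2
  exact not_isUnit_X_add_one ⟨u2, hu2⟩
end

section
/- Let R be an SDT ring. Then the quotient ring R/J(R) is reduced, i.e., for every x ∈ R, x² ∈ J(R) implies x ∈ J(R), where J(R) is the Jacobson radical of R. -/
namespace SDTAux

variable {R : Type*} [Ring R]

/-! ### Basic facts about the Jacobson radical (as a two-sided ideal) -/

private lemma jac_left_inv {j : R} (hj : j ∈ TwoSidedIdeal.jacobson (⊥ : TwoSidedIdeal R)) :
    ∃ z : R, z * (1 + j) = 1 := by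
  obtain ⟨z, hz⟩ := (TwoSidedIdeal.mem_jacobson_iff).mp hj 1
  rw [TwoSidedIdeal.mem_bot] at hz
  refine ⟨z, ?_⟩
  have h1 : z * (1 + j) - 1 = z * 1 * j + z - 1 := by noncomm_ring
  rw [hz] at h1
  exact sub_eq_zero.mp h1

private lemma isUnit_one_add_jac {j : R}
    (hj : j ∈ TwoSidedIdeal.jacobson (⊥ : TwoSidedIdeal R)) : IsUnit (1 + j) := by
  obtain ⟨z, hz⟩ := jac_left_inv hj
  have hzj : -(z * j) ∈ TwoSidedIdeal.jacobson (⊥ : TwoSidedIdeal R) :=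
    (TwoSidedIdeal.jacobson ⊥).neg_mem ((TwoSidedIdeal.jacobson ⊥).mul_mem_left _ _ hj)
  obtain ⟨z', hz'⟩ := jac_left_inv hzj
  have hzeq : 1 + -(z * j) = z := by
    have h : z + z * j = 1 := by rw [mul_add, mul_one] at hz; exact hz
    rw [← h]; abel
  rw [hzeq] at hz'
  have h1 : z' = 1 + j := by
    calc z' = z' * (z * (1 + j)) := by rw [hz, mul_one]
    _ = (z' * z) * (1 + j) := by rw [mul_assoc]
    _ = 1 + j := by rw [hz', one_mul]
  exact isUnit_iff_exists.mpr ⟨z, h1 ▸ hz', hz⟩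

private lemma isUnit_unit_add_jac {v j : R} (hv : IsUnit v)
    (hj : j ∈ TwoSidedIdeal.jacobson (⊥ : TwoSidedIdeal R)) : IsUnit (v + j) := by
  obtain ⟨w, rfl⟩ := hv
  have h : (w : R) + j = ↑w * (1 + ↑w⁻¹ * j) := by
    rw [mul_add, mul_one, Units.mul_inv_cancel_left]
  rw [h]
  exact w.isUnit.mul (isUnit_one_add_jac
    ((TwoSidedIdeal.jacobson (⊥ : TwoSidedIdeal R)).mul_mem_left _ _ hj))

/-! ### Basic facts about `Δ(R)` -/

private lemma delta_neg {d : R} (hd : d ∈ Delta R) : -d ∈ Delta R := by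
  intro u hu
  have h := (hd (-u) hu.neg).neg
  have h2 : -(d + -u) = -d + u := by abel
  rwa [h2] at h

private lemma delta_add {a b : R} (ha : a ∈ Delta R) (hb : b ∈ Delta R) :
    a + b ∈ Delta R := by
  intro u hu
  have h := ha (b + u) (hb u hu)
  rwa [← add_assoc] at h

private lemma delta_sub {a b : R} (ha : a ∈ Delta R) (hb : b ∈ Delta R) :
    a - b ∈ Delta R := by
  rw [sub_eq_add_neg]; exact delta_add ha (delta_neg hb)

private lemma delta_unit_mul {v d : R} (hv : IsUnit v) (hd : d ∈ Delta R) :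
    v * d ∈ Delta R := by
  obtain ⟨w, rfl⟩ := hv
  intro u hu
  have h := (w.isUnit).mul (hd (↑w⁻¹ * u) ((w⁻¹).isUnit.mul hu))
  rwa [mul_add, Units.mul_inv_cancel_left] at h

private lemma delta_mul_unit {v d : R} (hv : IsUnit v) (hd : d ∈ Delta R) :
    d * v ∈ Delta R := by
  obtain ⟨w, rfl⟩ := hv
  intro u hu
  have h := (hd (u * ↑w⁻¹) (hu.mul (w⁻¹).isUnit)).mul w.isUnit
  rwa [add_mul, Units.inv_mul_cancel_right] at h

private lemma delta_mul {a b : R} (ha : a ∈ Delta R) (hb : b ∈ Delta R) :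
    a * b ∈ Delta R := by
  have h1 : IsUnit (b + 1) := hb 1 isUnit_one
  have h2 : a * (b + 1) ∈ Delta R := delta_mul_unit h1 ha
  have h3 : a * (b + 1) - a ∈ Delta R := delta_sub h2 ha
  have h4 : a * b = a * (b + 1) - a := by noncomm_ring
  rwa [h4]

private lemma jac_subset_delta {j : R}
    (hj : j ∈ TwoSidedIdeal.jacobson (⊥ : TwoSidedIdeal R)) : j ∈ Delta R := by
  intro u hu
  rw [add_comm]
  exact isUnit_unit_add_jac hu hj

private lemma delta_idem_eq_zero {g : R} (hg : g ∈ Delta R) (hgg : g * g = g) :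
    g = 0 := by
  obtain ⟨w, hw⟩ := hg (-1) isUnit_one.neg
  have h2 : (g + -1) * g = 0 := by
    have h : (g + -1) * g = g * g - g := by noncomm_ring
    rw [h, hgg, sub_self]
  calc g = (↑w⁻¹ * ↑w) * g := by rw [Units.inv_mul, one_mul]
  _ = ↑w⁻¹ * ((g + -1) * g) := by rw [mul_assoc, hw]
  _ = 0 := by rw [h2, mul_zero]

/-! ### Step 1 : `x² ∈ J` implies `x ∈ Δ(R)` -/

private lemma mem_delta_of_sq_mem_jac (hR : IsSDTRing R) {x : R}
    (hxx : x * x ∈ TwoSidedIdeal.jacobson (⊥ : TwoSidedIdeal R)) : x ∈ Delta R := by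
  obtain ⟨e, d, he3, hd, hcomm, hx⟩ := hR x
  have he3' : e * e * e = e := by
    have h := he3; rw [pow_succ, pow_two] at h; exact h
  have hv : (e + 1 - e*e) * (e + 1 - e*e) = 1 := by
    have h : (e + 1 - e*e) * (e + 1 - e*e) = 1 + (e*e*e - e)*e - 2*(e*e*e - e) := by
      noncomm_ring
    rw [he3', sub_self, zero_mul, mul_zero, add_zero, sub_zero] at h
    exact h
  have hw : (1 - e - e*e) * (1 - e - e*e) = 1 := by
    have h : (1 - e - e*e) * (1 - e - e*e) = 1 + (e*e*e - e)*e + 2*(e*e*e - e) := by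
      noncomm_ring
    rw [he3', sub_self, zero_mul, mul_zero, add_zero, add_zero] at h
    exact h
  have hvU : IsUnit (e + 1 - e*e) := isUnit_iff_exists.mpr ⟨_, hv, hv⟩
  have hwU : IsUnit (1 - e - e*e) := isUnit_iff_exists.mpr ⟨_, hw, hw⟩
  have h2edΔ : e*d + e*d ∈ Delta R := by
    have h2ed : e*d + e*d = (e + 1 - e*e)*d - (1 - e - e*e)*d := by noncomm_ring
    rw [h2ed]; exact delta_sub (delta_unit_mul hvU hd) (delta_unit_mul hwU hd)
  have hee : e*e = x*x - (e*d + e*d) - d*d := by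
    rw [hx]
    have hde : d*e = e*d := hcomm.symm
    calc e*e = (e+d)*(e+d) - (e*d + d*e) - d*d := by noncomm_ring
    _ = (e+d)*(e+d) - (e*d + e*d) - d*d := by rw [hde]
  have heeΔ : e*e ∈ Delta R := by
    rw [hee]
    exact delta_sub (delta_sub (jac_subset_delta hxx) h2edΔ) (delta_mul hd hd)
  have heeI : (e*e)*(e*e) = e*e := by
    calc (e*e)*(e*e) = (e*e*e)*e := by noncomm_ring
    _ = e*e := by rw [he3']
  have hee0 : e*e = 0 := delta_idem_eq_zero heeΔ heeI
  have he0 : e = 0 := by rw [← he3', hee0, zero_mul]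
  rw [hx, he0, zero_add]
  exact hd

/-! ### Step 2 : SDT rings are clean -/

private lemma sdt_clean (hR : IsSDTRing R) (a : R) :
    ∃ f v : R, f * f = f ∧ IsUnit v ∧ a = f + v := by
  obtain ⟨e, d, he3, hd, _, ha⟩ := hR a
  have he3' : e * e * e = e := by
    have h := he3; rw [pow_succ, pow_two] at h; exact h
  refine ⟨1 - e*e, (e*e + e - 1) + d, ?_, ?_, ?_⟩
  · have h : (1 - e*e)*(1 - e*e) = (1 - e*e) + (e*e*e - e)*e := by noncomm_ring
    rw [he3', sub_self, zero_mul, add_zero] at h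
    exact h
  · have hι : (e*e + e - 1)*(e*e + e - 1) = 1 + (e*e*e - e)*e + 2*(e*e*e - e) := by
      noncomm_ring
    rw [he3', sub_self, zero_mul, mul_zero, add_zero, add_zero] at hι
    have hιU : IsUnit (e*e + e - 1) := isUnit_iff_exists.mpr ⟨_, hι, hι⟩
    have h := hd _ hιU
    rwa [add_comm] at h
  · rw [ha]; abel

/-! ### Step 3 : the matrix-unit swap argument -/

private def sT (x t : R) : R := t * (x * t)
private def sK (x t : R) : R := sT x t * x
private def sD (x t : R) : R := (x * t) * x
private def sE (x t : R) : R := sT x t - (x * t) * sT x t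
private def sKH (x t : R) : R := sK x t - (x * t) * sK x t
private def sG (x t : R) : R := (x * t) + sKH x t
private def sU (x t : R) : R := 1 - sG x t + sE x t - sD x t
private def sV (x t : R) : R := 1 - sG x t + sD x t - sE x t

/-- The abstract 2×2 matrix-unit computation. -/
private lemma swap_system {Q : Type*} [Ring Q] (P T K D : Q)
    (hPP : P*P = P) (hTP : T*P = T) (hKP : K*P = 0) (hKK : K*K = K) (hKT : K*T = T)
    (hKD : K*D = 0) (hDP : D*P = 0) (hDT : D*T = P) (hDK : D*K = D) (hPD : P*D = D)
    (hTD : T*D = K) :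
    (1 - (P + (K - P*K)) + (T - P*T) - D) * (1 - (P + (K - P*K)) + D - (T - P*T)) = 1 ∧
    (1 - (P + (K - P*K)) + D - (T - P*T)) * (1 - (P + (K - P*K)) + (T - P*T) - D) = 1 := by
  set KH := K - P*K with hKHdef
  set E := T - P*T with hEdef
  set G := P + KH with hGdef
  have hPKH : P*KH = 0 := by
    have h : P*KH = P*K - (P*P)*K := by rw [hKHdef]; noncomm_ring
    rw [hPP, sub_self] at h; exact h
  have hKHP : KH*P = 0 := by
    have h : KH*P = K*P - P*(K*P) := by rw [hKHdef]; noncomm_ring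
    rw [hKP, mul_zero, sub_self] at h; exact h
  have hKHKH : KH*KH = KH := by
    have h : KH*KH = K*K - (K*P)*K - P*(K*K) + P*((K*P)*K) := by rw [hKHdef]; noncomm_ring
    rw [hKP, hKK, zero_mul, mul_zero, add_zero, sub_zero] at h
    rw [h, hKHdef]
  have hGG : G*G = G := by
    have h : G*G = P*P + P*KH + KH*P + KH*KH := by rw [hGdef]; noncomm_ring
    rw [hPP, hPKH, hKHP, hKHKH, add_zero, add_zero] at h
    rw [h, hGdef]
  have hKHD : KH*D = 0 := by
    have h : KH*D = K*D - P*(K*D) := by rw [hKHdef]; noncomm_ring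
    rw [hKD, mul_zero, sub_self] at h; exact h
  have hGD : G*D = D := by
    have h : G*D = P*D + KH*D := by rw [hGdef]; noncomm_ring
    rw [hPD, hKHD, add_zero] at h; exact h
  have hDKH : D*KH = D := by
    have h : D*KH = D*K - (D*P)*K := by rw [hKHdef]; noncomm_ring
    rw [hDK, hDP, zero_mul, sub_zero] at h; exact h
  have hDG : D*G = D := by
    have h : D*G = D*P + D*KH := by rw [hGdef]; noncomm_ring
    rw [hDP, hDKH, zero_add] at h; exact h
  have hPE : P*E = 0 := by
    have h : P*E = P*T - (P*P)*T := by rw [hEdef]; noncomm_ring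
    rw [hPP, sub_self] at h; exact h
  have hKHE : KH*E = E := by
    have h : KH*E = K*T - (K*P)*T - P*(K*T) + P*((K*P)*T) := by
      rw [hKHdef, hEdef]; noncomm_ring
    rw [hKP, hKT, zero_mul, mul_zero, add_zero, sub_zero] at h
    rw [h, hEdef]
  have hGE : G*E = E := by
    have h : G*E = P*E + KH*E := by rw [hGdef]; noncomm_ring
    rw [hPE, hKHE, zero_add] at h; exact h
  have hEP : E*P = E := by
    have h : E*P = T*P - P*(T*P) := by rw [hEdef]; noncomm_ring
    rw [hTP] at h
    rw [h, hEdef]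
  have hEKH : E*KH = 0 := by
    have h : E*KH = (T*K - (T*P)*K) - (P*(T*K) - P*((T*P)*K)) := by
      rw [hEdef, hKHdef]; noncomm_ring
    rw [hTP] at h
    rw [h]; abel
  have hEG : E*G = E := by
    have h : E*G = E*P + E*KH := by rw [hGdef]; noncomm_ring
    rw [hEP, hEKH, add_zero] at h; exact h
  have hED : E*D = KH := by
    have h : E*D = T*D - P*(T*D) := by rw [hEdef]; noncomm_ring
    rw [hTD] at h
    rw [h, hKHdef]
  have hDE : D*E = P := by
    have h : D*E = D*T - (D*P)*T := by rw [hEdef]; noncomm_ring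
    rw [hDT, hDP, zero_mul, sub_zero] at h; exact h
  have hDD : D*D = 0 := by
    calc D*D = D*(P*D) := by rw [hPD]
    _ = (D*P)*D := by rw [mul_assoc]
    _ = 0 := by rw [hDP, zero_mul]
  have hEE : E*E = 0 := by
    have h : E*E = (T*T - (T*P)*T) - (P*(T*T) - P*((T*P)*T)) := by
      rw [hEdef]; noncomm_ring
    rw [hTP] at h
    rw [h]; abel
  have m5 : (1-G)*(1-G) = 1-G := by
    have h : (1-G)*(1-G) = 1 - G - G + G*G := by noncomm_ring
    rw [hGG] at h
    rw [h]; abel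
  have m1 : (1-G)*D = 0 := by rw [sub_mul, one_mul, hGD, sub_self]
  have m2 : (1-G)*E = 0 := by rw [sub_mul, one_mul, hGE, sub_self]
  have m3 : D*(1-G) = 0 := by rw [mul_sub, mul_one, hDG, sub_self]
  have m4 : E*(1-G) = 0 := by rw [mul_sub, mul_one, hEG, sub_self]
  constructor
  · calc (1 - G + E - D) * (1 - G + D - E)
        = (1-G)*(1-G) + ((1-G)*D - (1-G)*E) + (E*(1-G) - D*(1-G))
            + (E*D - E*E - D*D + D*E) := by noncomm_ring
    _ = 1 := by rw [m5, m1, m2, m3, m4, hED, hEE, hDD, hDE, hGdef]; abel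
  · calc (1 - G + D - E) * (1 - G + E - D)
        = (1-G)*(1-G) + ((1-G)*E - (1-G)*D) + (D*(1-G) - E*(1-G))
            + (D*E - D*D - E*E + E*D) := by noncomm_ring
    _ = 1 := by rw [m5, m1, m2, m3, m4, hED, hEE, hDD, hDE, hGdef]; abel

private lemma swap_units {Q : Type*} [Ring Q] (X T₀ : Q) (hX : X*X = 0)
    (hP : (X*T₀)*(X*T₀) = X*T₀) :
    sU X T₀ * sV X T₀ = 1 ∧ sV X T₀ * sU X T₀ = 1 := by
  have hXP : X*(X*T₀) = 0 := by rw [← mul_assoc, hX, zero_mul]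
  have hXT : X * sT X T₀ = X*T₀ := by
    simp only [sT]; rw [← mul_assoc, hP]
  have hTP : sT X T₀ * (X*T₀) = sT X T₀ := by
    simp only [sT]; rw [mul_assoc, hP]
  have hKP : sK X T₀ * (X*T₀) = 0 := by
    simp only [sK]; rw [mul_assoc, hXP, mul_zero]
  have hKK : sK X T₀ * sK X T₀ = sK X T₀ := by
    calc sK X T₀ * sK X T₀ = sT X T₀ * ((X * sT X T₀) * X) := by
          simp only [sK]; noncomm_ring
    _ = sT X T₀ * ((X*T₀) * X) := by rw [hXT]
    _ = (sT X T₀ * (X*T₀)) * X := by noncomm_ring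
    _ = sT X T₀ * X := by rw [hTP]
    _ = sK X T₀ := by simp only [sK]
  have hKT : sK X T₀ * sT X T₀ = sT X T₀ := by
    calc sK X T₀ * sT X T₀ = sT X T₀ * (X * sT X T₀) := by simp only [sK]; rw [mul_assoc]
    _ = sT X T₀ * (X*T₀) := by rw [hXT]
    _ = sT X T₀ := hTP
  have hKD : sK X T₀ * sD X T₀ = 0 := by
    calc sK X T₀ * sD X T₀ = (sT X T₀ * (X * (X*T₀))) * X := by
          simp only [sK, sD]; noncomm_ring
    _ = 0 := by rw [hXP, mul_zero, zero_mul]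
  have hDP : sD X T₀ * (X*T₀) = 0 := by
    calc sD X T₀ * (X*T₀) = (X*T₀) * (X * (X*T₀)) := by simp only [sD]; noncomm_ring
    _ = 0 := by rw [hXP, mul_zero]
  have hDT : sD X T₀ * sT X T₀ = X*T₀ := by
    calc sD X T₀ * sT X T₀ = (X*T₀) * (X * sT X T₀) := by simp only [sD]; rw [mul_assoc]
    _ = (X*T₀) * (X*T₀) := by rw [hXT]
    _ = X*T₀ := hP
  have hDK : sD X T₀ * sK X T₀ = sD X T₀ := by
    calc sD X T₀ * sK X T₀ = (X*T₀) * ((X * sT X T₀) * X) := by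
          simp only [sD, sK]; noncomm_ring
    _ = (X*T₀) * ((X*T₀) * X) := by rw [hXT]
    _ = ((X*T₀) * (X*T₀)) * X := by noncomm_ring
    _ = (X*T₀)*X := by rw [hP]
    _ = sD X T₀ := by simp only [sD]
  have hPD : (X*T₀) * sD X T₀ = sD X T₀ := by
    calc (X*T₀) * sD X T₀ = ((X*T₀)*(X*T₀))*X := by simp only [sD]; noncomm_ring
    _ = (X*T₀)*X := by rw [hP]
    _ = sD X T₀ := by simp only [sD]
  have hTD : sT X T₀ * sD X T₀ = sK X T₀ := by
    calc sT X T₀ * sD X T₀ = (sT X T₀ * (X*T₀)) * X := by simp only [sD]; noncomm_ring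
    _ = sT X T₀ * X := by rw [hTP]
    _ = sK X T₀ := by simp only [sK]
  have H := swap_system (X*T₀) (sT X T₀) (sK X T₀) (sD X T₀) hP hTP hKP hKK hKT hKD
    hDP hDT hDK hPD hTD
  constructor
  · have h := H.1
    simpa only [sU, sV, sG, sKH, sE] using h
  · have h := H.2
    simpa only [sU, sV, sG, sKH, sE] using h

private lemma swap_kill {x t₀ : R} (hxΔ : x ∈ Delta R)
    (hxx : x*x ∈ TwoSidedIdeal.jacobson (⊥ : TwoSidedIdeal R))
    (hpp : (x*t₀)*(x*t₀) = x*t₀) : x*t₀ = 0 := by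
  set C := (TwoSidedIdeal.jacobson (⊥ : TwoSidedIdeal R)).ringCon with hCdef
  have hXQ : (x : C.Quotient) * (x : C.Quotient) = 0 := by
    have h0 : C (x*x) 0 := by
      rw [hCdef, TwoSidedIdeal.rel_iff]
      simpa using hxx
    have h1 : ((x*x : R) : C.Quotient) = ((0 : R) : C.Quotient) := (RingCon.eq C).mpr h0
    rw [RingCon.coe_mul, RingCon.coe_zero] at h1
    exact h1
  have hPQ : ((x : C.Quotient) * (t₀ : C.Quotient)) * ((x : C.Quotient) * (t₀ : C.Quotient))
      = (x : C.Quotient) * (t₀ : C.Quotient) := by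
    have h1 : (((x*t₀)*(x*t₀) : R) : C.Quotient) = ((x*t₀ : R) : C.Quotient) := by rw [hpp]
    rw [RingCon.coe_mul, RingCon.coe_mul] at h1
    exact h1
  obtain ⟨h1, h2⟩ := swap_units (x : C.Quotient) (t₀ : C.Quotient) hXQ hPQ
  have hcoeU : ((sU x t₀ : R) : C.Quotient) = sU (x : C.Quotient) (t₀ : C.Quotient) := by
    simp only [sU, sG, sKH, sK, sT, sD, sE, RingCon.coe_sub, RingCon.coe_add,
      RingCon.coe_mul, RingCon.coe_one]
  have hcoeV : ((sV x t₀ : R) : C.Quotient) = sV (x : C.Quotient) (t₀ : C.Quotient) := by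
    simp only [sV, sG, sKH, sK, sT, sD, sE, RingCon.coe_sub, RingCon.coe_add,
      RingCon.coe_mul, RingCon.coe_one]
  have hj1 : sU x t₀ * sV x t₀ - 1 ∈ TwoSidedIdeal.jacobson (⊥ : TwoSidedIdeal R) := by
    have hq : ((sU x t₀ * sV x t₀ : R) : C.Quotient) = ((1 : R) : C.Quotient) := by
      rw [RingCon.coe_mul, hcoeU, hcoeV, h1, RingCon.coe_one]
    exact ((TwoSidedIdeal.jacobson (⊥ : TwoSidedIdeal R)).rel_iff _ _).mp ((RingCon.eq C).mp hq)
  have hj2 : sV x t₀ * sU x t₀ - 1 ∈ TwoSidedIdeal.jacobson (⊥ : TwoSidedIdeal R) := by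
    have hq : ((sV x t₀ * sU x t₀ : R) : C.Quotient) = ((1 : R) : C.Quotient) := by
      rw [RingCon.coe_mul, hcoeU, hcoeV, h2, RingCon.coe_one]
    exact ((TwoSidedIdeal.jacobson (⊥ : TwoSidedIdeal R)).rel_iff _ _).mp ((RingCon.eq C).mp hq)
  have w1 : IsUnit (sU x t₀ * sV x t₀) := by
    have e1 : sU x t₀ * sV x t₀ = 1 + (sU x t₀ * sV x t₀ - 1) := by abel
    rw [e1]; exact isUnit_one_add_jac hj1
  have w2 : IsUnit (sV x t₀ * sU x t₀) := by
    have e1 : sV x t₀ * sU x t₀ = 1 + (sV x t₀ * sU x t₀ - 1) := by abel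
    rw [e1]; exact isUnit_one_add_jac hj2
  have hU : IsUnit (sU x t₀) := by
    obtain ⟨a1, ha1⟩ := w1
    obtain ⟨a2, ha2⟩ := w2
    have hra : sU x t₀ * (sV x t₀ * ↑a1⁻¹) = 1 := by
      rw [← mul_assoc, ← ha1, Units.mul_inv]
    have hla : (↑a2⁻¹ * sV x t₀) * sU x t₀ = 1 := by
      rw [mul_assoc, ← ha2, Units.inv_mul]
    have heq : (↑a2⁻¹ : R) * sV x t₀ = sV x t₀ * ↑a1⁻¹ := by
      calc (↑a2⁻¹ : R) * sV x t₀
          = ((↑a2⁻¹ * sV x t₀) * sU x t₀) * (sV x t₀ * ↑a1⁻¹) := by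
            rw [mul_assoc ((↑a2⁻¹ : R) * sV x t₀), hra, mul_one]
      _ = 1 * (sV x t₀ * ↑a1⁻¹) := by rw [hla]
      _ = sV x t₀ * ↑a1⁻¹ := one_mul _
    exact isUnit_iff_exists.mpr ⟨sV x t₀ * ↑a1⁻¹, hra, by rw [← heq]; exact hla⟩
  obtain ⟨w, hw⟩ := hxΔ _ hU
  have hpD' : (x*t₀) * sD x t₀ = (x*t₀) * x := by
    calc (x*t₀) * sD x t₀ = ((x*t₀)*(x*t₀))*x := by simp only [sD]; noncomm_ring
    _ = (x*t₀)*x := by rw [hpp]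
  have hpE : (x*t₀) * sE x t₀ = 0 := by
    have h : (x*t₀) * sE x t₀ = (x*t₀)*sT x t₀ - ((x*t₀)*(x*t₀))*sT x t₀ := by
      simp only [sE]; noncomm_ring
    rw [hpp, sub_self] at h; exact h
  have hpG : (x*t₀) * sG x t₀ = x*t₀ := by
    have h : (x*t₀) * sG x t₀
        = (x*t₀)*(x*t₀) + ((x*t₀)*sK x t₀ - ((x*t₀)*(x*t₀))*sK x t₀) := by
      simp only [sG, sKH]; noncomm_ring
    rw [hpp, sub_self, add_zero] at h; exact h
  have hpW : (x*t₀)*(x + sU x t₀) = 0 := by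
    have h : (x*t₀)*(x + sU x t₀)
        = (x*t₀)*x + ((x*t₀)*1 - (x*t₀)*sG x t₀ + (x*t₀)*sE x t₀ - (x*t₀)*sD x t₀) := by
      simp only [sU]; noncomm_ring
    rw [mul_one, hpG, hpE, hpD'] at h
    rw [h]; abel
  calc x*t₀ = (x*t₀) * ((x + sU x t₀) * ↑w⁻¹) := by rw [← hw, Units.mul_inv, mul_one]
  _ = ((x*t₀)*(x + sU x t₀)) * ↑w⁻¹ := by noncomm_ring
  _ = 0 := by rw [hpW, zero_mul]

/-! ### Step 4 : for `x ∈ Δ` with `x² ∈ J`, every `1 + x*y` is a unit -/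

private lemma isUnit_one_add_mul (hR : IsSDTRing R) {x : R} (hxΔ : x ∈ Delta R)
    (hxx : x*x ∈ TwoSidedIdeal.jacobson (⊥ : TwoSidedIdeal R)) (y : R) :
    IsUnit (1 + x*y) := by
  obtain ⟨f, v, hf, hv, hav⟩ := sdt_clean hR (-(x*y))
  obtain ⟨u, hu⟩ := hv
  have h1f : (1 - f)*(1 - f) = 1 - f := by
    have h : (1 - f)*(1 - f) = 1 - f - (f - f*f) := by noncomm_ring
    rw [hf, sub_self, sub_zero] at h; exact h
  have hcore : ((1 - f) * ↑u⁻¹) * ((-(x*y)) * (1 - f)) = 1 - f := by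
    have hinva : (↑u⁻¹ : R) * (-(x*y)) = ↑u⁻¹ * f + 1 := by
      rw [hav, ← hu, mul_add, Units.inv_mul]
    calc ((1 - f) * ↑u⁻¹) * ((-(x*y)) * (1 - f))
        = ((1 - f) * (↑u⁻¹ * (-(x*y)))) * (1 - f) := by noncomm_ring
    _ = ((1 - f) * (↑u⁻¹ * f + 1)) * (1 - f) := by rw [hinva]
    _ = (1 - f)*(↑u⁻¹*(f - f*f)) + (1 - f)*(1 - f) := by noncomm_ring
    _ = 1 - f := by rw [hf, sub_self, mul_zero, mul_zero, zero_add, h1f]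
  set p := ((-(x*y)) * (1 - f)) * ((1 - f) * ↑u⁻¹) with hpdef
  have hpp : p * p = p := by
    calc p * p
        = ((-(x*y)) * (1 - f)) * (((1 - f) * ↑u⁻¹) * ((-(x*y)) * (1 - f)))
            * ((1 - f) * ↑u⁻¹) := by rw [hpdef]; noncomm_ring
    _ = ((-(x*y)) * (1 - f)) * (1 - f) * ((1 - f) * ↑u⁻¹) := by rw [hcore]
    _ = ((-(x*y)) * ((1 - f)*(1 - f))) * ((1 - f) * ↑u⁻¹) := by noncomm_ring
    _ = p := by rw [h1f, hpdef]
  have hpxt : p = x * (-(y * ((1 - f) * ((1 - f) * ↑u⁻¹)))) := by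
    rw [hpdef]; noncomm_ring
  have hpp' : (x * (-(y * ((1 - f) * ((1 - f) * ↑u⁻¹)))))
      * (x * (-(y * ((1 - f) * ((1 - f) * ↑u⁻¹)))))
      = x * (-(y * ((1 - f) * ((1 - f) * ↑u⁻¹)))) := by
    rw [← hpxt]; exact hpp
  have hp0 : x * (-(y * ((1 - f) * ((1 - f) * ↑u⁻¹)))) = 0 :=
    swap_kill hxΔ hxx hpp'
  have hp0' : p = 0 := by rw [hpxt, hp0]
  have h1f0 : 1 - f = 0 := by
    calc 1 - f = (1 - f)*(1 - f) := h1f.symm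
    _ = (((1 - f) * ↑u⁻¹) * ((-(x*y)) * (1 - f)))
          * (((1 - f) * ↑u⁻¹) * ((-(x*y)) * (1 - f))) := by rw [hcore]
    _ = ((1 - f) * ↑u⁻¹) * p * ((-(x*y)) * (1 - f)) := by rw [hpdef]; noncomm_ring
    _ = 0 := by rw [hp0', mul_zero, zero_mul]
  have hf1 : f = 1 := by
    have := sub_eq_zero.mp h1f0; exact this.symm
  have hfinal : 1 + x*y = -↑u := by
    have h : -(x*y) = 1 + ↑u := by rw [hav, hf1, ← hu]
    calc 1 + x*y = 1 - -(x*y) := by abel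
    _ = 1 - (1 + ↑u) := by rw [h]
    _ = -↑u := by abel
  rw [hfinal]
  exact u.isUnit.neg

private lemma isUnit_one_add_swap {a b : R} (h : IsUnit (1 + a*b)) : IsUnit (1 + b*a) := by
  obtain ⟨u, hu⟩ := h
  have hc1 : (1 + a*b) * ↑u⁻¹ = 1 := by rw [← hu]; exact u.mul_inv
  have hc2 : (↑u⁻¹ : R) * (1 + a*b) = 1 := by rw [← hu]; exact u.inv_mul
  refine isUnit_iff_exists.mpr ⟨1 - b*↑u⁻¹*a, ?_, ?_⟩
  · have expand : (1 + b*a)*(1 - b*↑u⁻¹*a) = 1 + b*((1 - (1 + a*b)*↑u⁻¹)*a) := by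
      noncomm_ring
    rw [expand, hc1, sub_self, zero_mul, mul_zero, add_zero]
  · have expand : (1 - b*↑u⁻¹*a)*(1 + b*a) = 1 + b*((1 - ↑u⁻¹*(1 + a*b))*a) := by
      noncomm_ring
    rw [expand, hc2, sub_self, zero_mul, mul_zero, add_zero]

end SDTAux

theorem quotient_jacobson_reduced {R : Type*} [Ring R] (hR : IsSDTRing R) :
    ∀ x : R, x ^ 2 ∈ TwoSidedIdeal.jacobson (⊥ : TwoSidedIdeal R) →
      x ∈ TwoSidedIdeal.jacobson (⊥ : TwoSidedIdeal R) := by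
  intro x hx2
  have hxx : x * x ∈ TwoSidedIdeal.jacobson (⊥ : TwoSidedIdeal R) := by
    rwa [pow_two] at hx2
  have hxΔ : x ∈ Delta R := SDTAux.mem_delta_of_sq_mem_jac hR hxx
  rw [TwoSidedIdeal.mem_jacobson_iff]
  intro y
  have h1 : IsUnit (1 + y*x) :=
    SDTAux.isUnit_one_add_swap (SDTAux.isUnit_one_add_mul hR hxΔ hxx y)
  obtain ⟨w, hw⟩ := h1
  refine ⟨↑w⁻¹, ?_⟩
  rw [TwoSidedIdeal.mem_bot]
  have hinv : (↑w⁻¹ : R) * (1 + y*x) = 1 := by rw [← hw]; exact w.inv_mul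
  have h2 : ↑w⁻¹ * y * x + ↑w⁻¹ - 1 = ↑w⁻¹*(1 + y*x) - 1 := by noncomm_ring
  rw [hinv, sub_self] at h2
  exact h2
end

section
/- Let R be an SDT ring. Then: (1) 2 is a unit of R if and only if 3 ∈ J(R); (2) 3 is a unit of R if and only if 2 ∈ J(R), where J(R) is the Jacobson radical of R. -/
/-- If `e` is tripotent and `2` is a unit, then `1 + 3e` is a unit. -/
lemma isUnit_one_add_three_mul {R : Type*} [Ring R] {e : R} (he : e ^ 3 = e)
    (h2 : IsUnit (2 : R)) : IsUnit (1 + 3 * e) := by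
  have h8 : IsUnit (8 : R) := by
    have h := h2.pow 3
    norm_num at h
    exact h
  obtain ⟨u, hu⟩ := h8
  set c : R := ((u⁻¹ : Rˣ) : R) with hcdef
  have hc8 : (8 : R) * c = 1 := by rw [← hu]; exact u.mul_inv
  have hecC : Commute e c := by
    have h1 : Commute e (u : R) := by rw [hu]; exact Commute.ofNat_right e 8
    exact h1.units_inv_right
  have hec : e * c = c * e := hecC.eq
  have he' : e * (e * e) = e := by rw [← mul_assoc, ← pow_two, ← pow_succ, he]
  have hA : e * (c * e) = c * (e * e) := by rw [← mul_assoc, hec, mul_assoc]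
  have hB : e * (c * (e * e)) = c * e := by rw [← mul_assoc, hec, mul_assoc, he']
  set v : R := 1 + 3 * (c * e) - 9 * (c * (e * e)) with hvdef
  have hmul : (1 + 3 * e) * v = 1 := by
    calc (1 + 3 * e) * v
        = 1 + 3*e + 3*(c*e) - 9*(c*(e*e)) + 9*(e*(c*e)) - 27*(e*(c*(e*e))) := by
          rw [hvdef]; noncomm_ring
      _ = 1 + 3*e + 3*(c*e) - 9*(c*(e*e)) + 9*(c*(e*e)) - 27*(c*e) := by rw [hA, hB]
      _ = 1 + 3*e - 3*(8*(c*e)) := by noncomm_ring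
      _ = 1 + 3*e - 3*((8*c)*e) := by rw [mul_assoc]
      _ = 1 + 3*e - 3*(1*e) := by rw [hc8]
      _ = 1 := by noncomm_ring
  have hcomm : Commute (1 + 3 * e) v := by
    have hce : Commute e (c * e) := hecC.mul_right (Commute.refl e)
    have hcee : Commute e (c * (e * e)) :=
      hecC.mul_right ((Commute.refl e).mul_right (Commute.refl e))
    have hev : Commute e v := by
      rw [hvdef]
      exact ((Commute.one_right e).add_right
        ((Commute.ofNat_right e 3).mul_right hce)).sub_right
        ((Commute.ofNat_right e 9).mul_right hcee)
    exact (Commute.one_left v).add_left ((Commute.ofNat_left 3 v).mul_left hev)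
  exact ⟨⟨1 + 3 * e, v, hmul, by rw [← hcomm.eq, hmul]⟩, rfl⟩

/-- If `e` is tripotent and `3` is a unit, then `1 + 2e` is a unit. -/
lemma isUnit_one_add_two_mul {R : Type*} [Ring R] {e : R} (he : e ^ 3 = e)
    (h3 : IsUnit (3 : R)) : IsUnit (1 + 2 * e) := by
  obtain ⟨u, hu⟩ := h3
  set c : R := ((u⁻¹ : Rˣ) : R) with hcdef
  have hc3 : (3 : R) * c = 1 := by rw [← hu]; exact u.mul_inv
  have hecC : Commute e c := by
    have h1 : Commute e (u : R) := by rw [hu]; exact Commute.ofNat_right e 3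
    exact h1.units_inv_right
  have hec : e * c = c * e := hecC.eq
  have he' : e * (e * e) = e := by rw [← mul_assoc, ← pow_two, ← pow_succ, he]
  have hA : e * (c * e) = c * (e * e) := by rw [← mul_assoc, hec, mul_assoc]
  have hB : e * (c * (e * e)) = c * e := by rw [← mul_assoc, hec, mul_assoc, he']
  set v : R := 1 + 2 * (c * e) - 4 * (c * (e * e)) with hvdef
  have hmul : (1 + 2 * e) * v = 1 := by
    calc (1 + 2 * e) * v
        = 1 + 2*e + 2*(c*e) - 4*(c*(e*e)) + 4*(e*(c*e)) - 8*(e*(c*(e*e))) := by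
          rw [hvdef]; noncomm_ring
      _ = 1 + 2*e + 2*(c*e) - 4*(c*(e*e)) + 4*(c*(e*e)) - 8*(c*e) := by rw [hA, hB]
      _ = 1 + 2*e - 2*(3*(c*e)) := by noncomm_ring
      _ = 1 + 2*e - 2*((3*c)*e) := by rw [mul_assoc]
      _ = 1 + 2*e - 2*(1*e) := by rw [hc3]
      _ = 1 := by noncomm_ring
  have hcomm : Commute (1 + 2 * e) v := by
    have hce : Commute e (c * e) := hecC.mul_right (Commute.refl e)
    have hcee : Commute e (c * (e * e)) :=
      hecC.mul_right ((Commute.refl e).mul_right (Commute.refl e))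
    have hev : Commute e v := by
      rw [hvdef]
      exact ((Commute.one_right e).add_right
        ((Commute.ofNat_right e 2).mul_right hce)).sub_right
        ((Commute.ofNat_right e 4).mul_right hcee)
    exact (Commute.one_left v).add_left ((Commute.ofNat_left 2 v).mul_left hev)
  exact ⟨⟨1 + 2 * e, v, hmul, by rw [← hcomm.eq, hmul]⟩, rfl⟩

theorem two_unit_iff_three_jacobson {R : Type*} [Ring R] (hR : IsSDTRing R) :
    (IsUnit (2 : R) ↔ (3 : R) ∈ TwoSidedIdeal.jacobson (⊥ : TwoSidedIdeal R)) ∧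
    (IsUnit (3 : R) ↔ (2 : R) ∈ TwoSidedIdeal.jacobson (⊥ : TwoSidedIdeal R)) := by
  constructor
  · constructor
    · intro h2
      rw [TwoSidedIdeal.mem_jacobson_iff]
      intro y
      obtain ⟨e, d, he, hd, hcd, hy⟩ := hR y
      have h3d : d + (d + d) ∈ Delta R := delta_add hd (delta_add hd hd)
      have hU : IsUnit ((d + (d + d)) + (1 + 3 * e)) :=
        h3d _ (isUnit_one_add_three_mul he h2)
      have heq : (d + (d + d)) + (1 + 3 * e) = 1 + y * 3 := by
        rw [hy]; noncomm_ring
      rw [heq] at hU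
      obtain ⟨w, hw⟩ := hU
      refine ⟨((w⁻¹ : Rˣ) : R), ?_⟩
      rw [TwoSidedIdeal.mem_bot]
      have hwi : ((w⁻¹ : Rˣ) : R) * (1 + y * 3) = 1 := by rw [← hw]; exact w.inv_mul
      calc ((w⁻¹ : Rˣ) : R) * y * 3 + ((w⁻¹ : Rˣ) : R) - 1
          = ((w⁻¹ : Rˣ) : R) * (1 + y * 3) - 1 := by noncomm_ring
        _ = 0 := by rw [hwi, sub_self]
    · intro h3
      rw [TwoSidedIdeal.mem_jacobson_iff] at h3
      obtain ⟨z, hz⟩ := h3 1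
      rw [TwoSidedIdeal.mem_bot] at hz
      have hz1 : z * 1 * 3 + z = 1 := sub_eq_zero.mp hz
      have h4 : z * 4 = 1 := by
        calc z * 4 = z * 1 * 3 + z := by noncomm_ring
          _ = 1 := hz1
      have hzc : (2 : R) * z = z * 2 := (Commute.ofNat_left 2 z).eq
      have h22 : (2 : R) * 2 = 4 := by norm_num
      have p1 : (2 : R) * (z * 2) = 1 := by
        rw [← mul_assoc, hzc, mul_assoc, h22]; exact h4
      have p2 : (z * 2) * 2 = 1 := by rw [mul_assoc, h22]; exact h4
      exact ⟨⟨2, z * 2, p1, p2⟩, rfl⟩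
  · constructor
    · intro h3
      rw [TwoSidedIdeal.mem_jacobson_iff]
      intro y
      obtain ⟨e, d, he, hd, hcd, hy⟩ := hR y
      have h2d : d + d ∈ Delta R := delta_add hd hd
      have hU : IsUnit ((d + d) + (1 + 2 * e)) :=
        h2d _ (isUnit_one_add_two_mul he h3)
      have heq : (d + d) + (1 + 2 * e) = 1 + y * 2 := by
        rw [hy]; noncomm_ring
      rw [heq] at hU
      obtain ⟨w, hw⟩ := hU
      refine ⟨((w⁻¹ : Rˣ) : R), ?_⟩
      rw [TwoSidedIdeal.mem_bot]
      have hwi : ((w⁻¹ : Rˣ) : R) * (1 + y * 2) = 1 := by rw [← hw]; exact w.inv_mul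
      calc ((w⁻¹ : Rˣ) : R) * y * 2 + ((w⁻¹ : Rˣ) : R) - 1
          = ((w⁻¹ : Rˣ) : R) * (1 + y * 2) - 1 := by noncomm_ring
        _ = 0 := by rw [hwi, sub_self]
    · intro h2
      rw [TwoSidedIdeal.mem_jacobson_iff] at h2
      obtain ⟨z, hz⟩ := h2 1
      rw [TwoSidedIdeal.mem_bot] at hz
      have hz1 : z * 1 * 2 + z = 1 := sub_eq_zero.mp hz
      have h3 : z * 3 = 1 := by
        calc z * 3 = z * 1 * 2 + z := by noncomm_ring
          _ = 1 := hz1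
      have h3' : (3 : R) * z = 1 := by
        rw [(Commute.ofNat_left 3 z).eq]; exact h3
      exact ⟨⟨3, z, h3', h3⟩, rfl⟩
end

section
/- Let R be an SDT ring such that 2 is a unit of R. Then Δ(R) is a two-sided ideal of R (i.e., for every d ∈ Δ(R) and r ∈ R, both rd ∈ Δ(R) and dr ∈ Δ(R)); in particular, Δ(R) = J(R), where J(R) is the Jacobson radical of R. -/
section Aux

variable {R : Type*} [Ring R]

lemma Delta.add_mem {x y : R} (hx : x ∈ Delta R) (hy : y ∈ Delta R) :
    x + y ∈ Delta R := by
  intro u hu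
  have := hx (y + u) (hy u hu)
  rwa [← add_assoc] at this

lemma Delta.neg_mem {x : R} (hx : x ∈ Delta R) : -x ∈ Delta R := by
  intro u hu
  have := (hx (-u) hu.neg).neg
  rwa [neg_add, neg_neg] at this

lemma Delta.sub_mem {x y : R} (hx : x ∈ Delta R) (hy : y ∈ Delta R) :
    x - y ∈ Delta R := by
  rw [sub_eq_add_neg]
  exact Delta.add_mem hx (Delta.neg_mem hy)

lemma Delta.unit_mul {u x : R} (hu : IsUnit u) (hx : x ∈ Delta R) :
    u * x ∈ Delta R := by
  intro v hv
  have hkey : u * x + v = u * (x + ↑hu.unit⁻¹ * v) := by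
    rw [mul_add, ← mul_assoc, hu.mul_val_inv, one_mul]
  rw [hkey]
  exact hu.mul (hx _ ((hu.unit⁻¹.isUnit).mul hv))

lemma Delta.mul_unit {u x : R} (hu : IsUnit u) (hx : x ∈ Delta R) :
    x * u ∈ Delta R := by
  intro v hv
  have hkey : x * u + v = (x + v * ↑hu.unit⁻¹) * u := by
    rw [add_mul, mul_assoc, hu.val_inv_mul, mul_one]
  rw [hkey]
  exact (hx _ (hv.mul hu.unit⁻¹.isUnit)).mul hu

lemma Delta.mul_mem {x y : R} (hx : x ∈ Delta R) (hy : y ∈ Delta R) :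
    x * y ∈ Delta R := by
  have h1 : IsUnit (y + 1) := hy 1 isUnit_one
  have h2 : x * y = x * (y + 1) - x := by noncomm_ring
  rw [h2]
  exact Delta.sub_mem (Delta.mul_unit h1 hx) hx

lemma tripotent_mul_delta {e d : R} (h2 : IsUnit (2 : R)) (he : e ^ 3 = e)
    (hd : d ∈ Delta R) : e * d ∈ Delta R ∧ d * e ∈ Delta R := by
  set t : R := ↑h2.unit⁻¹ with ht
  have ht2 : t * 2 = 1 := h2.val_inv_mul
  have h2t : 2 * t = 1 := h2.mul_val_inv
  have htu : IsUnit t := h2.unit⁻¹.isUnit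
  have he4 : e ^ 4 = e ^ 2 := by
    rw [pow_succ, he, sq]
  -- the two involutive units
  have hf : (e ^ 2 + e - 1) * (e ^ 2 + e - 1) = 1 := by
    have expand : (e ^ 2 + e - 1) * (e ^ 2 + e - 1)
        = e ^ 4 + 2 * e ^ 3 - e ^ 2 - 2 * e + 1 := by noncomm_ring
    rw [expand, he4, he]; noncomm_ring
  have hg : (e ^ 2 - e - 1) * (e ^ 2 - e - 1) = 1 := by
    have expand : (e ^ 2 - e - 1) * (e ^ 2 - e - 1)
        = e ^ 4 - 2 * e ^ 3 - e ^ 2 + 2 * e + 1 := by noncomm_ring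
    rw [expand, he4, he]; noncomm_ring
  have huf : IsUnit (e ^ 2 + e - 1) := ⟨⟨_, _, hf, hf⟩, rfl⟩
  have hug : IsUnit (e ^ 2 - e - 1) := ⟨⟨_, _, hg, hg⟩, rfl⟩
  constructor
  · have key : e * d = t * ((e ^ 2 + e - 1) * d - (e ^ 2 - e - 1) * d) := by
      have h : (e ^ 2 + e - 1) * d - (e ^ 2 - e - 1) * d = 2 * (e * d) := by noncomm_ring
      rw [h, ← mul_assoc, ht2, one_mul]
    rw [key]
    exact Delta.unit_mul htu
      (Delta.sub_mem (Delta.unit_mul huf hd) (Delta.unit_mul hug hd))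
  · have key : d * e = (d * (e ^ 2 + e - 1) - d * (e ^ 2 - e - 1)) * t := by
      have h : d * (e ^ 2 + e - 1) - d * (e ^ 2 - e - 1) = (d * e) * 2 := by noncomm_ring
      rw [h, mul_assoc, h2t, mul_one]
    rw [key]
    exact Delta.mul_unit htu
      (Delta.sub_mem (Delta.mul_unit huf hd) (Delta.mul_unit hug hd))

lemma jacobson_left_inv {j : R} (hj : j ∈ TwoSidedIdeal.jacobson (⊥ : TwoSidedIdeal R)) :
    ∃ z : R, z * (1 + j) = 1 := by
  obtain ⟨z, hz⟩ := (TwoSidedIdeal.mem_jacobson_iff.mp hj) 1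
  rw [TwoSidedIdeal.mem_bot, sub_eq_zero] at hz
  refine ⟨z, ?_⟩
  rw [mul_add, mul_one, ← hz]
  noncomm_ring

lemma isUnit_one_add_jacobson {j : R}
    (hj : j ∈ TwoSidedIdeal.jacobson (⊥ : TwoSidedIdeal R)) : IsUnit (1 + j) := by
  set J := TwoSidedIdeal.jacobson (⊥ : TwoSidedIdeal R)
  obtain ⟨z, hz⟩ := jacobson_left_inv hj
  have hzj : -(z * j) ∈ J := J.neg_mem (J.mul_mem_left z j hj)
  have hz2 : z = 1 + -(z * j) := by
    have h : z + z * j = 1 := by rw [← hz]; noncomm_ring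
    rw [← h]; abel
  obtain ⟨w, hw⟩ := jacobson_left_inv hzj
  rw [← hz2] at hw
  have hw' : w = 1 + j := by
    calc w = w * (z * (1 + j)) := by rw [hz, mul_one]
    _ = (w * z) * (1 + j) := by rw [mul_assoc]
    _ = 1 + j := by rw [hw, one_mul]
  exact ⟨⟨1 + j, z, by rw [← hw', hw], hz⟩, rfl⟩

lemma jacobson_subset_delta {j : R}
    (hj : j ∈ TwoSidedIdeal.jacobson (⊥ : TwoSidedIdeal R)) : j ∈ Delta R := by
  intro u hu
  set J := TwoSidedIdeal.jacobson (⊥ : TwoSidedIdeal R)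
  have h1 : ↑hu.unit⁻¹ * j ∈ J := J.mul_mem_left _ j hj
  have h2 : IsUnit (1 + ↑hu.unit⁻¹ * j) := isUnit_one_add_jacobson h1
  have hkey : j + u = u * (1 + ↑hu.unit⁻¹ * j) := by
    rw [mul_add, mul_one, ← mul_assoc, hu.mul_val_inv, one_mul, add_comm]
  rw [hkey]
  exact hu.mul h2

end Aux

theorem delta_ideal_of_two_unit {R : Type*} [Ring R] (hR : IsSDTRing R)
    (h2 : IsUnit (2 : R)) :
    (∀ d ∈ Delta R, ∀ r : R, r * d ∈ Delta R ∧ d * r ∈ Delta R) ∧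
    Delta R = (TwoSidedIdeal.jacobson (⊥ : TwoSidedIdeal R) : Set R) := by
  have hIdeal : ∀ d ∈ Delta R, ∀ r : R, r * d ∈ Delta R ∧ d * r ∈ Delta R := by
    intro d hd r
    obtain ⟨e, d', he, hd', _, hr⟩ := hR r
    obtain ⟨hl, hrr⟩ := tripotent_mul_delta h2 he hd
    constructor
    · rw [hr, add_mul]
      exact Delta.add_mem hl (Delta.mul_mem hd' hd)
    · rw [hr, mul_add]
      exact Delta.add_mem hrr (Delta.mul_mem hd hd')
  refine ⟨hIdeal, ?_⟩
  ext x
  constructor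
  · intro hx
    rw [SetLike.mem_coe, TwoSidedIdeal.mem_jacobson_iff]
    intro y
    have hyx : y * x ∈ Delta R := (hIdeal x hx y).1
    have hu : IsUnit (y * x + 1) := hyx 1 isUnit_one
    refine ⟨↑hu.unit⁻¹, ?_⟩
    rw [TwoSidedIdeal.mem_bot]
    have h := hu.val_inv_mul
    rw [mul_add, mul_one] at h
    rw [mul_assoc, sub_eq_zero]
    exact h
  · intro hx
    exact jacobson_subset_delta hx
end

section
/- Every SDI ring is a ΔU ring; that is, if R is an SDI ring, then 1 + Δ(R) = U(R). -/
/-- A ring `R` is an SDI ring if every `a ∈ R` can be written `a = e + d`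
with `e² = e`, `d ∈ Δ(R)` and `ed = de`. -/
def IsSDIRing (R : Type*) [Ring R] : Prop :=
  ∀ a : R, ∃ e d : R, e * e = e ∧ d ∈ Delta R ∧ e * d = d * e ∧ a = e + d

theorem isSDI_deltaU {R : Type*} [Ring R] (hR : IsSDIRing R) :
    ∀ x : R, IsUnit x ↔ ∃ d ∈ Delta R, x = 1 + d := by
  intro x
  constructor
  · intro hx
    obtain ⟨e, d, he, hd, hc, hx'⟩ := hR x
    have hne : IsUnit (-e) := by
      have := hd (-x) hx.neg
      rwa [show d + -x = -e by rw [hx']; abel] at this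
    have heu : IsUnit e := by simpa using hne.neg
    have he1 : e = 1 := by
      have := heu.mul_left_cancel (by rw [he, mul_one] : e * e = e * 1)
      exact this
    exact ⟨d, hd, by rw [hx', he1]⟩
  · rintro ⟨d, hd, rfl⟩
    have := hd 1 isUnit_one
    rwa [add_comm] at this
end

section
/- Let R be an SDT ring which is a domain (a nontrivial ring without zero divisors). Then R is a local ring. -/
theorem isLocalRing_of_isSDT_domain {R : Type*} [Ring R] [Nontrivial R] [NoZeroDivisors R]
    (hR : IsSDTRing R) : IsLocalRing R := by
  have key : ∀ a : R, IsUnit a ∨ IsUnit (1 - a) := by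
    intro a
    obtain ⟨e, d, he, hd, -, rfl⟩ := hR a
    have h0 : e * ((e - 1) * (e + 1)) = 0 := by
      have h : e * ((e - 1) * (e + 1)) = e ^ 3 - e := by noncomm_ring
      rw [h, he, sub_self]
    have h3 : e = 0 ∨ e = 1 ∨ e = -1 := by
      rcases mul_eq_zero.mp h0 with h | h
      · exact Or.inl h
      · rcases mul_eq_zero.mp h with h | h
        · exact Or.inr (Or.inl (sub_eq_zero.mp h))
        · exact Or.inr (Or.inr (eq_neg_of_add_eq_zero_left h))
    rcases h3 with rfl | rfl | rfl
    · right
      have : (1 : R) - (0 + d) = -d + 1 := by noncomm_ring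
      rw [this]
      have hu : IsUnit (d + (-1 : R)) := hd (-1) isUnit_one.neg
      have := hu.neg
      simpa [neg_add, add_comm] using this
    · left
      have : (1 : R) + d = d + 1 := add_comm _ _
      rw [this]
      exact hd 1 isUnit_one
    · left
      have : (-1 : R) + d = d + (-1) := add_comm _ _
      rw [this]
      exact hd (-1) isUnit_one.neg
  refine ⟨fun {a b} hab => ?_⟩
  rcases key a with h | h
  · exact Or.inl h
  · exact Or.inr (by rwa [eq_sub_of_add_eq' hab])
end

section
/- Let R be a local ring which is semi-tripotent, i.e., every a ∈ R can be written a = e + j with e³ = e and j ∈ J(R) (no commutativity required). Then R is an SDT ring. -/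
/-- Noncommutative version: in a local ring, if `a + b` is a unit then `a` or `b` is. -/
lemma isUnit_or_isUnit_of_isUnit_add'' {R : Type*} [Ring R] [IsLocalRing R] {a b : R}
    (h : IsUnit (a + b)) : IsUnit a ∨ IsUnit b := by
  have hv : (↑h.unit⁻¹ : R) * a + (↑h.unit⁻¹ : R) * b = 1 := by
    rw [← mul_add]; exact h.val_inv_mul
  rcases IsLocalRing.isUnit_or_isUnit_of_add_one hv with h' | h'
  · left; rw [← Units.mul_inv_cancel_left h.unit a]; exact h.unit.isUnit.mul h'
  · right; rw [← Units.mul_inv_cancel_left h.unit b]; exact h.unit.isUnit.mul h'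

/-- In a local ring, every non-unit belongs to `Δ(R)`. -/
lemma nonunit_mem_delta {R : Type*} [Ring R] [IsLocalRing R] {x : R}
    (hx : ¬IsUnit x) : x ∈ Delta R := by
  intro u hu
  have key : (x + u) + (-x) = u := by abel
  rcases isUnit_or_isUnit_of_isUnit_add'' (a := x + u) (b := -x) (by rwa [key]) with h' | h'
  · exact h'
  · exact absurd (by simpa using h'.neg) hx

theorem isSDT_of_semiTripotent_local {R : Type*} [Ring R] [IsLocalRing R]
    (h : ∀ a : R, ∃ e j : R, e ^ 3 = e ∧
      j ∈ TwoSidedIdeal.jacobson (⊥ : TwoSidedIdeal R) ∧ a = e + j) :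
    IsSDTRing R := by
  intro a
  by_cases ha : IsUnit a
  · obtain ⟨e, j, he, hj, haej⟩ := h a
    -- j is not a unit
    have hjnu : ¬IsUnit j := by
      intro hju
      obtain ⟨z, hz⟩ := TwoSidedIdeal.mem_jacobson_iff.mp hj (-(↑hju.unit⁻¹ : R))
      rw [TwoSidedIdeal.mem_bot] at hz
      have hvj : (↑hju.unit⁻¹ : R) * j = 1 := hju.val_inv_mul
      have : z * -(↑hju.unit⁻¹ : R) * j + z - 1 = -1 := by
        rw [mul_assoc, neg_mul, hvj, mul_neg_one]
        abel
      rw [this] at hz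
      have : (1 : R) = 0 := by linear_combination (norm := abel) -hz
      exact one_ne_zero this
    -- e is a unit
    have heu : IsUnit e := by
      rcases isUnit_or_isUnit_of_isUnit_add'' (a := e) (b := j) (by rwa [← haej]) with h' | h'
      · exact h'
      · exact absurd h' hjnu
    have he2 : e ^ 2 = 1 := by
      apply heu.mul_left_cancel
      rw [mul_one, ← pow_succ']
      exact he
    have hprod : (1 - e) * (1 + e) = 0 := by
      have : (1 - e) * (1 + e) = 1 - e ^ 2 := by noncomm_ring
      rw [this, he2, sub_self]
    have hcase : ¬IsUnit (1 - e) ∨ ¬IsUnit (1 + e) := by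
      by_contra hc
      push_neg at hc
      exact not_isUnit_zero (hprod ▸ (hc.1.mul hc.2))
    rcases hcase with h1 | h1
    · refine ⟨1, a - 1, one_pow 3, nonunit_mem_delta ?_, by rw [one_mul, mul_one], by abel⟩
      intro hu'
      have hrw : a - 1 = (-(1 - e)) + j := by rw [haej]; abel
      rcases isUnit_or_isUnit_of_isUnit_add'' (a := -(1 - e)) (b := j) (by rwa [← hrw]) with h2 | h2
      · exact h1 (by simpa using h2.neg)
      · exact hjnu h2
    · refine ⟨-1, a + 1, by norm_num, nonunit_mem_delta ?_, by rw [neg_one_mul, mul_neg_one], by abel⟩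
      intro hu'
      have hrw : a + 1 = (1 + e) + j := by rw [haej]; abel
      rcases isUnit_or_isUnit_of_isUnit_add'' (a := 1 + e) (b := j) (by rwa [← hrw]) with h2 | h2
      · exact h1 h2
      · exact hjnu h2
  · exact ⟨0, a, by norm_num, nonunit_mem_delta ha, by rw [zero_mul, mul_zero], by rw [zero_add]⟩
end

section
/- Let R be an SDT ring and let J(R) be its Jacobson radical. Then every element a of the quotient ring R/J(R) satisfies a³ = a; moreover, R/J(R) is isomorphic as a ring to a direct product R₁ × R₂, where every element x of R₁ satisfies x² = x (R₁ is Boolean) and R₂ is a ring in which 3 = 0 and every element y satisfies y³ = y (a Yaqub ring, allowing R₁ or R₂ to be the zero ring). -/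
universe u

namespace SDTaux

variable {R : Type*} [Ring R]

lemma delta_neg {x : R} (hx : x ∈ Delta R) : -x ∈ Delta R := by
  intro u hu
  have h := (hx (-u) hu.neg).neg
  have : -(x + -u) = -x + u := by abel
  rwa [this] at h

lemma delta_add {x y : R} (hx : x ∈ Delta R) (hy : y ∈ Delta R) : x + y ∈ Delta R := by
  intro u hu
  have h := hx (y + u) (hy u hu)
  rwa [← add_assoc] at h

lemma delta_unit_mul {x v : R} (hx : x ∈ Delta R) (hv : IsUnit v) : v * x ∈ Delta R := by
  obtain ⟨w, rfl⟩ := hv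
  intro u hu
  have h1 : IsUnit (x + ↑w⁻¹ * u) := hx _ ((Units.isUnit w⁻¹).mul hu)
  have h2 := (w.isUnit).mul h1
  rwa [mul_add, Units.mul_inv_cancel_left] at h2

lemma delta_mul_unit {x v : R} (hx : x ∈ Delta R) (hv : IsUnit v) : x * v ∈ Delta R := by
  obtain ⟨w, rfl⟩ := hv
  intro u hu
  have h1 : IsUnit (x + u * ↑w⁻¹) := hx _ (hu.mul (Units.isUnit w⁻¹))
  have h2 := h1.mul (w.isUnit)
  rwa [add_mul, Units.inv_mul_cancel_right] at h2

lemma delta_mul {x y : R} (hx : x ∈ Delta R) (hy : y ∈ Delta R) : x * y ∈ Delta R := by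
  intro u hu
  have h1 : IsUnit (y + 1) := hy 1 isUnit_one
  have h3 : IsUnit (-x + u) := delta_neg hx u hu
  have h := (delta_mul_unit hx h1) _ h3
  have heq : x * (y + 1) + (-x + u) = x * y + u := by noncomm_ring
  rwa [heq] at h

lemma delta_one_add {x : R} (hx : x ∈ Delta R) : IsUnit (1 + x) := by
  have := hx 1 isUnit_one
  rwa [add_comm] at this

/-- Jacobson's lemma. -/
lemma jacobson_lemma {a b : R} (h : IsUnit (1 + a * b)) : IsUnit (1 + b * a) := by
  obtain ⟨v, hv⟩ := h
  set c := ((v⁻¹ : Rˣ) : R) with hc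
  have h1 : (1 + a * b) * c = 1 := by rw [← hv]; exact v.mul_inv
  have h2 : c * (1 + a * b) = 1 := by rw [← hv]; exact v.inv_mul
  have e1 : a * b * c = 1 - c := by
    rw [add_mul, one_mul] at h1
    exact eq_sub_of_add_eq' h1
  have e2 : c * (a * b) = 1 - c := by
    rw [mul_add, mul_one] at h2
    exact eq_sub_of_add_eq' h2
  refine isUnit_iff_exists.mpr ⟨1 - b * c * a, ?_, ?_⟩
  · have expand : (1 + b * a) * (1 - b * c * a)
        = 1 + b * a - b * c * a - b * (a * b * c) * a := by noncomm_ring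
    rw [expand, e1]; noncomm_ring
  · have expand : (1 - b * c * a) * (1 + b * a)
        = 1 + b * a - b * c * a - b * (c * (a * b)) * a := by noncomm_ring
    rw [expand, e2]; noncomm_ring

section tripotent

variable {e : R} (he : e * e * e = e)

include he in
lemma unit_v : IsUnit (1 - e - e * e) := by
  have hsq : (1 - e - e * e) * (1 - e - e * e) = 1 := by
    have expand : (1 - e - e * e) * (1 - e - e * e)
        = 1 - 2 * e - e * e + 2 * (e * e * e) + (e * e * e) * e := by noncomm_ring
    rw [expand, he]; noncomm_ring
  exact isUnit_iff_exists.mpr ⟨_, hsq, hsq⟩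

include he in
lemma unit_w : IsUnit (1 + e - e * e) := by
  have hsq : (1 + e - e * e) * (1 + e - e * e) = 1 := by
    have expand : (1 + e - e * e) * (1 + e - e * e)
        = 1 + 2 * e - e * e - 2 * (e * e * e) + (e * e * e) * e := by noncomm_ring
    rw [expand, he]; noncomm_ring
  exact isUnit_iff_exists.mpr ⟨_, hsq, hsq⟩

include he in
lemma delta_two_mul {x : R} (hx : x ∈ Delta R) : 2 * (e * x) ∈ Delta R := by
  have h1 : (1 + e - e * e) * x ∈ Delta R := delta_unit_mul hx (unit_w he)
  have h2 : (-(1 - e - e * e)) * x ∈ Delta R := delta_unit_mul hx (unit_v he).neg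
  have h := delta_add h1 h2
  have heq : (1 + e - e * e) * x + (-(1 - e - e * e)) * x = 2 * (e * x) := by noncomm_ring
  rwa [heq] at h

end tripotent

lemma idem_delta_zero {f : R} (hf : f * f = f) (hfd : f ∈ Delta R) : f = 0 := by
  obtain ⟨v, hv⟩ := hfd (-1) isUnit_one.neg
  have h2 : f * (f + -1) = 0 := by rw [mul_add, hf]; simp
  have h3 : f * ((f + -1) * ↑v⁻¹) = 0 := by rw [← mul_assoc, h2, zero_mul]
  rwa [← hv, v.mul_inv, mul_one] at h3

lemma sq_zero_delta (hR : IsSDTRing R) {n : R} (hn : n * n = 0) : n ∈ Delta R := by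
  obtain ⟨e, d, he, hd, hcomm, rfl⟩ := hR n
  have h3e : e * e * e = e := by
    have := he; rwa [show (3:ℕ) = 2+1 from rfl, pow_succ, pow_two] at this
  have expand : (e + d) * (e + d) = e * e + (2 * (e * d) + d * d) := by
    calc (e + d) * (e + d) = e * e + (e * d + d * e + d * d) := by noncomm_ring
    _ = e * e + (2 * (e * d) + d * d) := by rw [← hcomm]; noncomm_ring
  rw [expand] at hn
  have hkey : e * e = -(2 * (e * d) + d * d) := eq_neg_of_add_eq_zero_left hn
  have hDelta : e * e ∈ Delta R := by
    rw [hkey]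
    exact delta_neg (delta_add (delta_two_mul h3e hd) (delta_mul hd hd))
  have hidem : (e * e) * (e * e) = e * e := by
    calc (e * e) * (e * e) = (e * e * e) * e := by noncomm_ring
    _ = e * e := by rw [h3e]
  have he0 : e * e = 0 := idem_delta_zero hidem hDelta
  have hez : e = 0 := by
    calc e = e * e * e := h3e.symm
    _ = 0 := by rw [he0, zero_mul]
  rw [hez, zero_add]
  exact hd

/-- The key corner lemma: `1 + f·w` is a unit for `f` idempotent, `w ∈ Δ`. -/
lemma one_add_idem_mul_delta (hR : IsSDTRing R) {f w : R} (hf : f * f = f)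
    (hw : w ∈ Delta R) : IsUnit (1 + f * w) := by
  have hf1f : f * (1 - f) = 0 := by rw [mul_sub, mul_one, hf, sub_self]
  have h1ff : (1 - f) * f = 0 := by rw [sub_mul, one_mul, hf, sub_self]
  set n₁ := f * w * (1 - f) with hn₁
  set n₂ := (1 - f) * w * f with hn₂
  have hsq₁ : n₁ * n₁ = 0 := by
    calc n₁ * n₁ = f * w * ((1 - f) * f) * (w * (1 - f)) := by rw [hn₁]; noncomm_ring
    _ = 0 := by rw [h1ff]; noncomm_ring
  have hsq₂ : n₂ * n₂ = 0 := by
    calc n₂ * n₂ = (1 - f) * w * (f * (1 - f)) * (w * f) := by rw [hn₂]; noncomm_ring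
    _ = 0 := by rw [hf1f]; noncomm_ring
  have hδ₁ : n₁ ∈ Delta R := sq_zero_delta hR hsq₁
  have hδ₂ : n₂ ∈ Delta R := sq_zero_delta hR hsq₂
  set μ := w + -n₁ + -n₂ with hμ
  have hμΔ : μ ∈ Delta R := delta_add (delta_add hw (delta_neg hδ₁)) (delta_neg hδ₂)
  have hfμ : f * μ = f * w * f := by
    calc f * μ = f * w - (f * f) * (w * (1 - f)) - (f * (1 - f)) * (w * f) := by
          rw [hμ, hn₁, hn₂]; noncomm_ring
    _ = f * w - f * (w * (1 - f)) - 0 * (w * f) := by rw [hf, hf1f]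
    _ = f * w * f := by noncomm_ring
  have hμf : μ * f = f * w * f := by
    calc μ * f = w * f - (f * w) * ((1 - f) * f) - ((1 - f) * w) * (f * f) := by
          rw [hμ, hn₁, hn₂]; noncomm_ring
    _ = w * f - (f * w) * 0 - ((1 - f) * w) * f := by rw [h1ff, hf]
    _ = f * w * f := by noncomm_ring
  have hcommμ : f * μ = μ * f := hfμ.trans hμf.symm
  obtain ⟨v, hv⟩ := delta_one_add hμΔ
  set s := ((v⁻¹ : Rˣ) : R) with hsdef
  have hs1 : (1 + μ) * s = 1 := by rw [← hv]; exact v.mul_inv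
  have hs2 : s * (1 + μ) = 1 := by rw [← hv]; exact v.inv_mul
  have hμs : μ * s = 1 - s := by
    rw [add_mul, one_mul] at hs1; exact eq_sub_of_add_eq' hs1
  have hsμ : s * μ = 1 - s := by
    rw [mul_add, mul_one] at hs2; exact eq_sub_of_add_eq' hs2
  have hcomm1μ : f * (1 + μ) = (1 + μ) * f := by
    rw [mul_add, add_mul, mul_one, one_mul, hcommμ]
  have hsf : s * f = f * s := by
    calc s * f = s * f * ((1 + μ) * s) := by rw [hs1, mul_one]
    _ = s * (f * (1 + μ)) * s := by noncomm_ring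
    _ = s * ((1 + μ) * f) * s := by rw [hcomm1μ]
    _ = (s * (1 + μ)) * (f * s) := by noncomm_ring
    _ = f * s := by rw [hs2, one_mul]
  have hffμ : f * (f * μ) = f * μ := by
    calc f * (f * μ) = (f * f) * μ := by noncomm_ring
    _ = f * μ := by rw [hf]
  set A := 1 + f * w * f with hA
  set c := f * s + 1 - f with hcdef
  have hA' : A = 1 + f * μ := by rw [hA, hfμ]
  have hAc : A * c = 1 := by
    calc A * c = f * s + 1 - f + (f * (μ * f)) * s + f * μ - f * (μ * f) := by
          rw [hA', hcdef]; noncomm_ring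
    _ = f * s + 1 - f + (f * (f * μ)) * s + f * μ - f * (f * μ) := by rw [← hcommμ]
    _ = f * s + 1 - f + (f * μ) * s + f * μ - f * μ := by rw [hffμ]
    _ = f * s + 1 - f + f * (μ * s) + f * μ - f * μ := by rw [show (f * μ) * s = f * (μ * s) from by noncomm_ring]
    _ = f * s + 1 - f + f * (1 - s) + f * μ - f * μ := by rw [hμs]
    _ = 1 := by noncomm_ring
  have hcA : c * A = 1 := by
    calc c * A = f * s + (f * (s * f)) * μ + 1 + f * μ - f - f * (f * μ) := by
          rw [hA', hcdef]; noncomm_ring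
    _ = f * s + (f * (f * s)) * μ + 1 + f * μ - f - f * μ := by rw [hsf, hffμ]
    _ = f * s + ((f * f) * s) * μ + 1 + f * μ - f - f * μ := by
          rw [show f * (f * s) = (f * f) * s from by noncomm_ring]
    _ = f * s + (f * s) * μ + 1 + f * μ - f - f * μ := by rw [hf]
    _ = f * s + f * (s * μ) + 1 + f * μ - f - f * μ := by
          rw [show (f * s) * μ = f * (s * μ) from by noncomm_ring]
    _ = f * s + f * (1 - s) + 1 + f * μ - f - f * μ := by rw [hsμ]
    _ = 1 := by noncomm_ring
  have hAunit : IsUnit A := isUnit_iff_exists.mpr ⟨c, hAc, hcA⟩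
  have hcf : c * f = f * s := by
    calc c * f = f * (s * f) + f - f * f := by rw [hcdef]; noncomm_ring
    _ = f * (f * s) + f - f := by rw [hsf, hf]
    _ = (f * f) * s + f - f := by rw [show f * (f * s) = (f * f) * s from by noncomm_ring]
    _ = f * s := by rw [hf]; noncomm_ring
  set N := c * (f * w * (1 - f)) with hN
  have hNsq : N * N = 0 := by
    have h1 : (1 - f) * (c * f) = 0 := by
      rw [hcf]
      calc (1 - f) * (f * s) = ((1 - f) * f) * s := by noncomm_ring
      _ = 0 := by rw [h1ff, zero_mul]
    calc N * N = c * (f * w) * ((1 - f) * (c * f)) * (w * (1 - f)) := by rw [hN]; noncomm_ring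
    _ = 0 := by rw [h1]; noncomm_ring
  have hNunit : IsUnit (1 + N) := by
    refine isUnit_iff_exists.mpr ⟨1 - N, ?_, ?_⟩
    · calc (1 + N) * (1 - N) = 1 - N * N := by noncomm_ring
      _ = 1 := by rw [hNsq, sub_zero]
    · calc (1 - N) * (1 + N) = 1 - N * N := by noncomm_ring
      _ = 1 := by rw [hNsq, sub_zero]
  have hfinal : A * (1 + N) = 1 + f * w := by
    calc A * (1 + N) = A + (A * c) * (f * w * (1 - f)) := by rw [hN]; noncomm_ring
    _ = A + f * w * (1 - f) := by rw [hAc, one_mul]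
    _ = 1 + f * w := by rw [hA]; noncomm_ring
  have := hAunit.mul hNunit
  rwa [hfinal] at this

lemma one_add_mul_delta_unit (hR : IsSDTRing R) {x : R} (hx : x ∈ Delta R) (y : R) :
    IsUnit (1 + y * x) := by
  obtain ⟨e, d, he, hd, hcomm, rfl⟩ := hR y
  have h3e : e * e * e = e := by
    have := he; rwa [show (3:ℕ) = 2+1 from rfl, pow_succ, pow_two] at this
  have hf : (e * e) * (e * e) = e * e := by
    calc (e * e) * (e * e) = (e * e * e) * e := by noncomm_ring
    _ = e * e := by rw [h3e]
  -- Step A : 1 + e*x is a unit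
  have hxvx : x + -((1 - e - e * e) * x) ∈ Delta R :=
    delta_add hx (delta_neg (delta_unit_mul hx (unit_v h3e)))
  obtain ⟨v₁, hv₁⟩ := delta_one_add hxvx
  set s₁ := ((v₁⁻¹ : Rˣ) : R) with hs₁def
  have hs₁ : (1 + (x + -((1 - e - e * e) * x))) * s₁ = 1 := by rw [← hv₁]; exact v₁.mul_inv
  have hs₁unit : IsUnit s₁ := Units.isUnit v₁⁻¹
  have hw' : -(x * s₁) ∈ Delta R := delta_neg (delta_mul_unit hx hs₁unit)
  have h1 : IsUnit (1 + (e * e) * (-(x * s₁))) := one_add_idem_mul_delta hR hf hw'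
  have h2 : IsUnit (1 + (-(x * s₁)) * (e * e)) := jacobson_lemma h1
  have h2' : IsUnit (1 + (-x) * (s₁ * (e * e))) := by
    have heq : (1 : R) + (-(x * s₁)) * (e * e) = 1 + (-x) * (s₁ * (e * e)) := by noncomm_ring
    rwa [heq] at h2
  have h3 : IsUnit (1 + (s₁ * (e * e)) * (-x)) := jacobson_lemma h2'
  have h3' : IsUnit (1 - s₁ * ((e * e) * x)) := by
    have heq : (1 : R) + (s₁ * (e * e)) * (-x) = 1 - s₁ * ((e * e) * x) := by noncomm_ring
    rwa [heq] at h3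
  have hprod : (1 + (x + -((1 - e - e * e) * x))) * (1 - s₁ * ((e * e) * x)) = 1 + e * x := by
    have hexp : (1 + (x + -((1 - e - e * e) * x))) * (1 - s₁ * ((e * e) * x))
        = (1 + (x + -((1 - e - e * e) * x)))
          - ((1 + (x + -((1 - e - e * e) * x))) * s₁) * ((e * e) * x) := by noncomm_ring
    rw [hexp, hs₁, one_mul]
    noncomm_ring
  have hstepA : IsUnit (1 + e * x) := by
    have := (delta_one_add hxvx).mul h3'
    rwa [hprod] at this
  -- Step B
  have hfinal : d * x + (1 + e * x) = 1 + (e + d) * x := by noncomm_ring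
  have := (delta_mul hd hx) _ hstepA
  rwa [hfinal] at this

lemma delta_subset_jacobson (hR : IsSDTRing R) {x : R} (hx : x ∈ Delta R) :
    x ∈ TwoSidedIdeal.jacobson (⊥ : TwoSidedIdeal R) := by
  rw [TwoSidedIdeal.mem_jacobson_iff]
  intro y
  obtain ⟨v, hv⟩ := one_add_mul_delta_unit hR hx y
  refine ⟨((v⁻¹ : Rˣ) : R), ?_⟩
  have hinv : ((v⁻¹ : Rˣ) : R) * (1 + y * x) = 1 := by rw [← hv]; exact v.inv_mul
  have : ((v⁻¹ : Rˣ) : R) * y * x + ((v⁻¹ : Rˣ) : R) - 1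
      = ((v⁻¹ : Rˣ) : R) * (1 + y * x) - 1 := by noncomm_ring
  rw [this, hinv, sub_self]
  exact TwoSidedIdeal.zero_mem _

end SDTaux

section Decomp
/-- decomposition of a tripotent ring -/
lemma tripotent_decomp (S : Type u) [Ring S] (h3 : ∀ a : S, a ^ 3 = a) :
    ∃ (R₁ : Type u) (R₂ : Type u) (_ : Ring R₁) (_ : Ring R₂),
      (∀ x : R₁, x * x = x) ∧ ((3 : R₂) = 0 ∧ ∀ y : R₂, y ^ 3 = y) ∧
      Nonempty (S ≃+* R₁ × R₂) := by
  have h8 : (8 : S) = 2 := by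
    have h := h3 2
    rwa [show (2:S)^3 = 8 from by norm_num] at h
  have h6 : (6 : S) = 0 := by
    rw [show (6:S) = 8 - 2 from by norm_num, h8, sub_self]
  have he : (3 : S) * 3 = 3 := by
    rw [show (3:S)*3 = 9 from by norm_num, show (9:S) = 3 + 6 from by norm_num, h6, add_zero]
  have h13 : ((1:S) - 3) * 3 = 0 := by
    rw [sub_mul, one_mul, he, sub_self]
  have h31 : (3:S) * (1 - 3) = 0 := by
    rw [mul_sub, mul_one, he, sub_self]
  have hcx : ∀ x : S, (3:S) * x = x * 3 := fun x => by noncomm_ring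
  -- the two congruences
  let c₁ : RingCon S := {
    r := fun a b => a * 3 = b * 3
    iseqv := ⟨fun _ => rfl, Eq.symm, Eq.trans⟩
    mul' := fun {w x y z} h1 h2 => by
      show (w * y) * 3 = (x * z) * 3
      calc (w * y) * 3 = w * (y * 3) := by rw [mul_assoc]
      _ = w * (z * 3) := by rw [h2]
      _ = w * (3 * z) := by rw [hcx]
      _ = (w * 3) * z := by rw [mul_assoc]
      _ = (x * 3) * z := by rw [h1]
      _ = x * (3 * z) := by rw [mul_assoc]
      _ = x * (z * 3) := by rw [hcx]
      _ = (x * z) * 3 := by rw [mul_assoc]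
    add' := fun {w x y z} h1 h2 => by
      show (w + y) * 3 = (x + z) * 3
      rw [add_mul, add_mul, h1, h2] }
  let c₂ : RingCon S := {
    r := fun a b => a * (1 - 3) = b * (1 - 3)
    iseqv := ⟨fun _ => rfl, Eq.symm, Eq.trans⟩
    mul' := fun {w x y z} h1 h2 => by
      show (w * y) * (1 - 3) = (x * z) * (1 - 3)
      have hcx' : ∀ t : S, (1 - 3 : S) * t = t * (1 - 3) := fun t => by noncomm_ring
      calc (w * y) * (1 - 3) = w * (y * (1 - 3)) := by rw [mul_assoc]
      _ = w * (z * (1 - 3)) := by rw [h2]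
      _ = w * ((1 - 3) * z) := by rw [hcx']
      _ = (w * (1 - 3)) * z := by rw [mul_assoc]
      _ = (x * (1 - 3)) * z := by rw [h1]
      _ = x * ((1 - 3) * z) := by rw [mul_assoc]
      _ = x * (z * (1 - 3)) := by rw [hcx']
      _ = (x * z) * (1 - 3) := by rw [mul_assoc]
    add' := fun {w x y z} h1 h2 => by
      show (w + y) * (1 - 3) = (x + z) * (1 - 3)
      rw [add_mul, add_mul, h1, h2] }
  refine ⟨c₁.Quotient, c₂.Quotient, inferInstance, inferInstance, ?_, ⟨?_, ?_⟩, ?_⟩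
  · -- Boolean
    intro p
    rcases p with ⟨x⟩
    show ((x : c₁.Quotient) * x : c₁.Quotient) = (x : c₁.Quotient)
    rw [← RingCon.coe_mul]
    refine c₁.eq.mpr ?_
    show (x * x) * 3 = x * 3
    set y := x * 3 with hy
    have hCy : Commute x (3:S) := (hcx x).symm
    have hy3 : y ^ 3 = y := by
      have hpow : y ^ 3 = x ^ 3 * 3 ^ 3 := hCy.mul_pow 3
      rw [hpow, h3, show (3:S)^3 = 27 from by norm_num,
        show (27:S) = 3 + 4 * 6 from by norm_num, h6]
      simp [hy]
    have h2y : y + y = 0 := by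
      calc y + y = x * (3 + 3) := by rw [mul_add]
      _ = x * 6 := by norm_num
      _ = 0 := by rw [h6, mul_zero]
    have h2yy : y * y + y * y = 0 := by
      calc y * y + y * y = (y + y) * y := by rw [add_mul]
      _ = 0 := by rw [h2y, zero_mul]
    set w := y ^ 2 - y with hw
    have hy4 : y ^ 4 = y ^ 2 := by
      rw [show (4:ℕ) = 3 + 1 from rfl, pow_succ, hy3, pow_two]
    have hww : w * w = 0 := by
      have expand : w * w = y ^ 4 - 2 * y ^ 3 + y ^ 2 := by rw [hw]; noncomm_ring
      rw [expand, hy4, hy3]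
      calc y ^ 2 - 2 * y + y ^ 2 = (y * y + y * y) - (y + y) := by noncomm_ring
      _ = 0 := by rw [h2yy, h2y, sub_self]
    have hw0 : w = 0 := by
      have h := h3 w
      rw [show (3:ℕ) = 2 + 1 from rfl, pow_succ, pow_two, hww, zero_mul] at h
      exact h.symm
    have hyy : y * y = y := by
      have : y ^ 2 = y := by
        have := sub_eq_zero.mp (hw ▸ hw0)
        exact this
      rwa [pow_two] at this
    calc (x * x) * 3 = (x * x) * ((3:S) * 3) := by rw [he]
    _ = x * (x * 3) * 3 := by noncomm_ring
    _ = x * ((3:S) * x) * 3 := by rw [hcx]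
    _ = (x * 3) * (x * 3) := by noncomm_ring
    _ = x * 3 := hyy
  · -- 3 = 0 in R₂
    have hc : (3 : c₂.Quotient) = (((3:ℕ) : S) : c₂.Quotient) := by
      rw [RingCon.coe_natCast]
      norm_num
    rw [hc, show (((3:ℕ) : S)) = (3:S) from by norm_num]
    show ((3:S) : c₂.Quotient) = 0
    rw [show (0 : c₂.Quotient) = ((0:S) : c₂.Quotient) from (RingCon.coe_zero c₂).symm]
    refine c₂.eq.mpr ?_
    show (3:S) * (1 - 3) = 0 * (1 - 3)
    rw [h31, zero_mul]
  · -- tripotency in R₂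
    intro p
    rcases p with ⟨x⟩
    show ((x : c₂.Quotient)) ^ 3 = (x : c₂.Quotient)
    rw [← RingCon.coe_pow, h3]
  · -- the iso
    refine ⟨RingEquiv.ofBijective ((c₁.mk').prod (c₂.mk')) ⟨?_, ?_⟩⟩
    · intro a b hab
      have h1 : c₁.mk' a = c₁.mk' b := congrArg Prod.fst hab
      have h2 : c₂.mk' a = c₂.mk' b := congrArg Prod.snd hab
      have r1 : a * 3 = b * 3 := c₁.eq.mp h1
      have r2 : a * (1 - 3) = b * (1 - 3) := c₂.eq.mp h2
      calc a = a * 3 + a * (1 - 3) := by noncomm_ring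
      _ = b * 3 + b * (1 - 3) := by rw [r1, r2]
      _ = b := by noncomm_ring
    · rintro ⟨p, q⟩
      rcases p with ⟨x⟩
      rcases q with ⟨y⟩
      refine ⟨x * 3 + y * (1 - 3), ?_⟩
      have hfst : c₁.mk' (x * 3 + y * (1 - 3)) = (x : c₁.Quotient) := by
        refine c₁.eq.mpr ?_
        show (x * 3 + y * (1 - 3)) * 3 = x * 3
        calc (x * 3 + y * (1 - 3)) * 3 = x * ((3:S) * 3) + y * ((1 - 3) * 3) := by noncomm_ring
        _ = x * 3 := by rw [he, h13, mul_zero, add_zero]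
      have hsnd : c₂.mk' (x * 3 + y * (1 - 3)) = (y : c₂.Quotient) := by
        refine c₂.eq.mpr ?_
        show (x * 3 + y * (1 - 3)) * (1 - 3) = y * (1 - 3)
        have h131 : ((1:S) - 3) * (1 - 3) = 1 - 3 := by
          rw [sub_mul, one_mul, h31, sub_zero]
        calc (x * 3 + y * (1 - 3)) * (1 - 3)
            = x * ((3:S) * (1 - 3)) + y * (((1:S) - 3) * (1 - 3)) := by noncomm_ring
        _ = y * (1 - 3) := by rw [h31, h131, mul_zero, zero_add]
      exact Prod.ext hfst hsnd

end Decomp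


theorem quotient_jacobson_boolean_times_yaqub {R : Type u} [Ring R] (hR : IsSDTRing R) :
    (∀ a : (TwoSidedIdeal.jacobson (⊥ : TwoSidedIdeal R)).ringCon.Quotient, a ^ 3 = a) ∧
    ∃ (R₁ : Type u) (R₂ : Type u) (_ : Ring R₁) (_ : Ring R₂),
      (∀ x : R₁, x * x = x) ∧ ((3 : R₂) = 0 ∧ ∀ y : R₂, y ^ 3 = y) ∧
      Nonempty ((TwoSidedIdeal.jacobson (⊥ : TwoSidedIdeal R)).ringCon.Quotient ≃+* R₁ × R₂) := by
  set J := TwoSidedIdeal.jacobson (⊥ : TwoSidedIdeal R) with hJdef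
  have htri : ∀ a : J.ringCon.Quotient, a ^ 3 = a := by
    intro a
    rcases a with ⟨a₀⟩
    obtain ⟨e, d, he, hd, hcomm, rfl⟩ := hR a₀
    have hd0 : ((d : R) : J.ringCon.Quotient) = 0 := by
      rw [show (0 : J.ringCon.Quotient) = ((0:R) : J.ringCon.Quotient) from
        (RingCon.coe_zero _).symm]
      refine (RingCon.eq _).mpr ?_
      rw [TwoSidedIdeal.rel_iff, sub_zero]
      exact SDTaux.delta_subset_jacobson hR hd
    show (((e + d : R) : J.ringCon.Quotient)) ^ 3 = ((e + d : R) : J.ringCon.Quotient)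
    have h1 : ((e + d : R) : J.ringCon.Quotient) = ((e : R) : J.ringCon.Quotient) := by
      rw [RingCon.coe_add, hd0, add_zero]
    rw [h1, ← RingCon.coe_pow, he]
  exact ⟨htri, tripotent_decomp _ htri⟩
end

section
/- Let R be a ring and let a = e + d be an SDT representation in R (i.e., e³ = e, d ∈ Δ(R), and ed = de). Then the left annihilator of a is contained in the left annihilator of e, and the right annihilator of a is contained in the right annihilator of e: for every r ∈ R, ra = 0 implies re = 0, and ar = 0 implies er = 0. -/
theorem ann_of_sdt_representation {R : Type*} [Ring R] (a e d : R)
    (he : e ^ 3 = e) (hd : d ∈ Delta R) (hcomm : e * d = d * e) (hsum : a = e + d) :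
    (∀ r : R, r * a = 0 → r * e = 0) ∧ (∀ r : R, a * r = 0 → e * r = 0) := by
  -- d + 1 and d - 1 are units, hence d^2 - 1 is a unit.
  have hu1 : IsUnit (d + 1) := hd 1 isUnit_one
  have hu2 : IsUnit (d + (-1)) := hd (-1) isUnit_one.neg
  have hu : IsUnit (d * d - 1) := by
    have := hu1.mul hu2
    have heq : (d + 1) * (d + (-1)) = d * d - 1 := by noncomm_ring
    rwa [heq] at this
  obtain ⟨u, hu⟩ := hu
  have he3 : e * e * e = e := by
    have : e ^ 3 = e * e * e := by noncomm_ring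
    rw [← this, he]
  constructor
  · intro r hr
    have h1 : r * e = -(r * d) := by
      rw [hsum, mul_add] at hr
      exact eq_neg_of_add_eq_zero_left hr
    have h2 : r * e * e = r * d * d := by
      rw [h1, neg_mul, mul_assoc, ← hcomm, ← mul_assoc, h1]
      noncomm_ring
    have h3 : r * e = -(r * d * d * d) := by
      calc r * e = r * e * e * e := by
            conv_lhs => rw [← he3]
            noncomm_ring
        _ = r * d * d * e := by rw [h2]
        _ = r * d * e * d := by rw [mul_assoc, ← hcomm, ← mul_assoc]
        _ = r * e * d * d := by rw [mul_assoc r d e, ← hcomm, ← mul_assoc]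
        _ = -(r * d * d * d) := by rw [h1]; noncomm_ring
    have h4 : r * d * (d * d - 1) = 0 := by
      have h6 : r * d = r * d * d * d := neg_injective (h1.symm.trans h3)
      calc r * d * (d * d - 1) = r * d * d * d - r * d := by noncomm_ring
        _ = 0 := by rw [← h6]; noncomm_ring
    have hrd : r * d = 0 := by
      have : r * d * (d * d - 1) * ↑u⁻¹ = 0 := by rw [h4, zero_mul]
      rwa [← hu, mul_assoc, Units.mul_inv, mul_one] at this
    rw [h1, hrd, neg_zero]
  · intro r hr
    have h1 : e * r = -(d * r) := by
      rw [hsum, add_mul] at hr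
      exact eq_neg_of_add_eq_zero_left hr
    have h2 : e * (e * r) = d * (d * r) := by
      rw [h1, mul_neg, ← mul_assoc, hcomm, mul_assoc, h1]
      noncomm_ring
    have h3 : e * r = -(d * (d * (d * r))) := by
      calc e * r = e * (e * (e * r)) := by
            rw [← mul_assoc, ← mul_assoc, he3]
        _ = e * (d * (d * r)) := by rw [h2]
        _ = d * (e * (d * r)) := by rw [← mul_assoc, hcomm, mul_assoc]
        _ = d * (d * (e * r)) := by rw [← mul_assoc e d r, hcomm, mul_assoc]
        _ = -(d * (d * (d * r))) := by rw [h1]; noncomm_ring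
    have h4 : (d * d - 1) * (d * r) = 0 := by
      have h6 : d * r = d * (d * (d * r)) := neg_injective (h1.symm.trans h3)
      calc (d * d - 1) * (d * r) = d * (d * (d * r)) - d * r := by noncomm_ring
        _ = 0 := by rw [← h6]; noncomm_ring
    have hrd : d * r = 0 := by
      have : ↑u⁻¹ * ((d * d - 1) * (d * r)) = 0 := by rw [h4, mul_zero]
      rwa [← hu, ← mul_assoc, Units.inv_mul, one_mul] at this
    rw [h1, hrd, neg_zero]
end

section
/- Let R be an SDT ring and let e ∈ R be an idempotent (e² = e). Then the corner ring eRe = {exe : x ∈ R}, which is a ring under the operations of R with multiplicative identity e, is an SDT ring (here Δ(eRe) = {x ∈ eRe : x + u is a unit of eRe for every unit u of eRe}). -/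
set_option maxHeartbeats 1000000

section Corner

variable {R : Type*} [Ring R]

lemma corner_left_absorb {e x : R} (he : e * e = e) (hx : e * x * e = x) :
    e * x = x := by
  conv_lhs => rw [← hx]
  rw [← mul_assoc, ← mul_assoc, he]
  exact hx

lemma corner_right_absorb {e x : R} (he : e * e = e) (hx : e * x * e = x) :
    x * e = x := by
  conv_lhs => rw [← hx]
  rw [mul_assoc, he]
  exact hx

/-- The corner ring `eRe` associated to an idempotent `e`, realized as the subtype
`{x : R // e * x * e = x}` with operations inherited from `R` and identity `e`. -/
def cornerRing {e : R} (he : e * e = e) : Ring {x : R // e * x * e = x} where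
  add a b := ⟨a.1 + b.1, by rw [mul_add, add_mul, a.2, b.2]⟩
  zero := ⟨0, by simp⟩
  neg a := ⟨-a.1, by rw [mul_neg, neg_mul, a.2]⟩
  mul a b := ⟨a.1 * b.1, by
    rw [← mul_assoc, corner_left_absorb he a.2, mul_assoc, corner_right_absorb he b.2]⟩
  one := ⟨e, by rw [he, he]⟩
  add_assoc a b c := Subtype.ext (add_assoc a.1 b.1 c.1)
  zero_add a := Subtype.ext (zero_add a.1)
  add_zero a := Subtype.ext (add_zero a.1)
  add_comm a b := Subtype.ext (add_comm a.1 b.1)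
  neg_add_cancel a := Subtype.ext (neg_add_cancel a.1)
  mul_assoc a b c := Subtype.ext (mul_assoc a.1 b.1 c.1)
  one_mul a := Subtype.ext (corner_left_absorb he a.2)
  mul_one a := Subtype.ext (corner_right_absorb he a.2)
  left_distrib a b c := Subtype.ext (left_distrib a.1 b.1 c.1)
  right_distrib a b c := Subtype.ext (right_distrib a.1 b.1 c.1)
  zero_mul a := Subtype.ext (zero_mul a.1)
  mul_zero a := Subtype.ext (mul_zero a.1)
  nsmul n a := ⟨n • a.1, by rw [mul_smul_comm, smul_mul_assoc, a.2]⟩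
  nsmul_zero a := Subtype.ext (zero_nsmul a.1)
  nsmul_succ n a := Subtype.ext (succ_nsmul a.1 n)
  zsmul n a := ⟨n • a.1, by rw [mul_smul_comm, smul_mul_assoc, a.2]⟩
  zsmul_zero' a := Subtype.ext (zero_zsmul a.1)
  zsmul_succ' n a := Subtype.ext (show ((n : ℤ) + 1) • a.1 = (n : ℤ) • a.1 + a.1 by
    rw [add_smul, one_smul])
  zsmul_neg' n a := Subtype.ext (show (Int.negSucc n) • a.1 = -(((n.succ : ℕ) : ℤ) • a.1) by
    rw [natCast_zsmul, negSucc_zsmul])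
  natCast n := ⟨n • e, by rw [mul_smul_comm, he, smul_mul_assoc, he]⟩
  natCast_zero := Subtype.ext (zero_nsmul e)
  natCast_succ n := Subtype.ext (succ_nsmul e n)
  intCast n := ⟨n • e, by rw [mul_smul_comm, he, smul_mul_assoc, he]⟩
  intCast_ofNat n := Subtype.ext (natCast_zsmul e n)
  intCast_negSucc n := Subtype.ext (negSucc_zsmul e n)

end Corner

section Aux

variable {R : Type*} [Ring R]

lemma unit_cancel_left {a x : R} (ha : IsUnit a) (h : a * x = 0) : x = 0 := by
  obtain ⟨u, rfl⟩ := ha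
  calc x = (↑u⁻¹ * ↑u) * x := by rw [u.inv_mul, one_mul]
  _ = ↑u⁻¹ * (↑u * x) := by rw [mul_assoc]
  _ = 0 := by rw [h, mul_zero]

lemma unit_cancel_right {a x : R} (ha : IsUnit a) (h : x * a = 0) : x = 0 := by
  obtain ⟨u, rfl⟩ := ha
  calc x = x * (↑u * ↑u⁻¹) := by rw [u.mul_inv, mul_one]
  _ = (x * ↑u) * ↑u⁻¹ := by rw [mul_assoc]
  _ = 0 := by rw [h, zero_mul]

lemma delta_df_zero {e t d : R} (ht : t * t * t = t) (hd : d ∈ Delta R)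
    (hc : t * d = d * t) (h0 : (t + d) * (1 - e) = 0) : d * (1 - e) = 0 := by
  rw [add_mul] at h0
  have htf : t * (1 - e) = -(d * (1 - e)) := eq_neg_of_add_eq_zero_left h0
  have h2 : t * (t * (1 - e)) = d * (d * (1 - e)) := by
    calc t * (t * (1 - e)) = t * (-(d * (1 - e))) := by rw [htf]
    _ = -((t * d) * (1 - e)) := by noncomm_ring
    _ = -((d * t) * (1 - e)) := by rw [hc]
    _ = -(d * (t * (1 - e))) := by noncomm_ring
    _ = -(d * (-(d * (1 - e)))) := by rw [htf]
    _ = d * (d * (1 - e)) := by noncomm_ring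
  have h3 : t * (t * (t * (1 - e))) = -(d * (d * (d * (1 - e)))) := by
    calc t * (t * (t * (1 - e))) = t * (d * (d * (1 - e))) := by rw [h2]
    _ = (t * d) * (d * (1 - e)) := by noncomm_ring
    _ = (d * t) * (d * (1 - e)) := by rw [hc]
    _ = d * ((t * d) * (1 - e)) := by noncomm_ring
    _ = d * ((d * t) * (1 - e)) := by rw [hc]
    _ = d * (d * (t * (1 - e))) := by noncomm_ring
    _ = d * (d * (-(d * (1 - e)))) := by rw [htf]
    _ = -(d * (d * (d * (1 - e)))) := by noncomm_ring
  have h4 : t * (t * (t * (1 - e))) = t * (1 - e) := by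
    rw [show t * (t * (t * (1 - e))) = (t * t * t) * (1 - e) from by noncomm_ring, ht]
  have h5 : d * (d * (d * (1 - e))) = d * (1 - e) := by
    have h := h4.symm.trans h3
    rw [htf] at h
    exact (neg_inj.mp h).symm
  have h6 : (d + 1) * ((d + (-1)) * (d * (1 - e))) = 0 := by
    have expand : (d + 1) * ((d + (-1)) * (d * (1 - e)))
        = d * (d * (d * (1 - e))) - d * (1 - e) := by noncomm_ring
    rw [expand, h5, sub_self]
  have hu1 : IsUnit (d + 1) := hd 1 isUnit_one
  have hu2 : IsUnit (d + (-1)) := hd (-1) isUnit_one.neg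
  exact unit_cancel_left hu2 (unit_cancel_left hu1 h6)

lemma delta_fd_zero {e t d : R} (ht : t * t * t = t) (hd : d ∈ Delta R)
    (hc : t * d = d * t) (h0 : (1 - e) * (t + d) = 0) : (1 - e) * d = 0 := by
  rw [mul_add] at h0
  have htf : (1 - e) * t = -((1 - e) * d) := eq_neg_of_add_eq_zero_left h0
  have h2 : ((1 - e) * t) * t = ((1 - e) * d) * d := by
    calc ((1 - e) * t) * t = (-((1 - e) * d)) * t := by rw [htf]
    _ = -((1 - e) * (d * t)) := by noncomm_ring
    _ = -((1 - e) * (t * d)) := by rw [hc]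
    _ = (-((1 - e) * t)) * d := by noncomm_ring
    _ = (-(-((1 - e) * d))) * d := by rw [htf]
    _ = ((1 - e) * d) * d := by noncomm_ring
  have h3 : (((1 - e) * t) * t) * t = -((((1 - e) * d) * d) * d) := by
    calc (((1 - e) * t) * t) * t = (((1 - e) * d) * d) * t := by rw [h2]
    _ = ((1 - e) * d) * (d * t) := by noncomm_ring
    _ = ((1 - e) * d) * (t * d) := by rw [hc]
    _ = (((1 - e) * d) * t) * d := by noncomm_ring
    _ = ((-((1 - e) * t)) * t) * d := by
          rw [show (1 - e) * d = -((1 - e) * t) from by rw [htf, neg_neg]]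
    _ = -((((1 - e) * t) * t) * d) := by noncomm_ring
    _ = -((((1 - e) * d) * d) * d) := by rw [h2]
  have h4 : (((1 - e) * t) * t) * t = (1 - e) * t := by
    rw [show (((1 - e) * t) * t) * t = (1 - e) * (t * t * t) from by noncomm_ring, ht]
  have h5 : (((1 - e) * d) * d) * d = (1 - e) * d := by
    have h := h4.symm.trans h3
    rw [htf] at h
    exact (neg_inj.mp h).symm
  have h6 : ((((1 - e) * d) * (d + 1))) * (d + (-1)) = 0 := by
    have expand : ((((1 - e) * d) * (d + 1))) * (d + (-1))
        = (((1 - e) * d) * d) * d - (1 - e) * d := by noncomm_ring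
    rw [expand, h5, sub_self]
  have hu1 : IsUnit (d + 1) := hd 1 isUnit_one
  have hu2 : IsUnit (d + (-1)) := hd (-1) isUnit_one.neg
  exact unit_cancel_right hu1 (unit_cancel_right hu2 h6)

/-- `Δ(R) ∩ eRe ⊆ Δ(eRe)` (in explicit terms). -/
lemma delta_corner {e d u v : R} (he : e * e = e) (hd : d ∈ Delta R)
    (hed : e * d = d) (hde : d * e = d) (hu : e * u * e = u) (hv : e * v * e = v)
    (huv : u * v = e) (hvu : v * u = e) :
    ∃ w : R, e * w * e = w ∧ (d + u) * w = e ∧ w * (d + u) = e := by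
  have hue : u * e = u := corner_right_absorb he hu
  have heu : e * u = u := corner_left_absorb he hu
  have hve : v * e = v := corner_right_absorb he hv
  have hev : e * v = v := corner_left_absorb he hv
  have hUnit : IsUnit (u + (1 - e)) := by
    refine ⟨⟨u + (1 - e), v + (1 - e), ?_, ?_⟩, rfl⟩
    · have expand : (u + (1 - e)) * (v + (1 - e))
          = u * v + (u - u * e) + (v - e * v) + (1 - e - e + e * e) := by noncomm_ring
      rw [expand, huv, hue, hev, he]; abel
    · have expand : (v + (1 - e)) * (u + (1 - e))
          = v * u + (v - v * e) + (u - e * u) + (1 - e - e + e * e) := by noncomm_ring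
      rw [expand, hvu, hve, heu, he]; abel
  obtain ⟨Z, hZ⟩ := hd (u + (1 - e)) hUnit
  have hzz : (Z : R) * ↑Z⁻¹ = 1 := Z.mul_inv
  have hzz' : (↑Z⁻¹ : R) * ↑Z = 1 := Z.inv_mul
  have hez : e * (Z : R) = d + u := by
    rw [hZ]
    have expand : e * (d + (u + (1 - e))) = e * d + e * u + (e - e * e) := by noncomm_ring
    rw [expand, hed, heu, he]; abel
  have hze : (Z : R) * e = d + u := by
    rw [hZ]
    have expand : (d + (u + (1 - e))) * e = d * e + u * e + (e - e * e) := by noncomm_ring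
    rw [expand, hde, hue, he]; abel
  have hcz : e * (Z : R) = (Z : R) * e := hez.trans hze.symm
  have hczi : e * (↑Z⁻¹ : R) = (↑Z⁻¹ : R) * e := by
    calc e * (↑Z⁻¹ : R) = (↑Z⁻¹ * ↑Z) * (e * ↑Z⁻¹) := by rw [hzz', one_mul]
    _ = ↑Z⁻¹ * ((↑Z * e) * ↑Z⁻¹) := by noncomm_ring
    _ = ↑Z⁻¹ * ((e * ↑Z) * ↑Z⁻¹) := by rw [hcz]
    _ = (↑Z⁻¹ * e) * (↑Z * ↑Z⁻¹) := by noncomm_ring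
    _ = ↑Z⁻¹ * e := by rw [hzz, mul_one]
  refine ⟨e * ↑Z⁻¹ * e, ?_, ?_, ?_⟩
  · rw [show e * (e * (↑Z⁻¹ : R) * e) * e = (e * e) * ↑Z⁻¹ * (e * e) from by noncomm_ring, he]
  · calc (d + u) * (e * (↑Z⁻¹ : R) * e) = (↑Z * e) * ((↑Z⁻¹ * e) * e) := by rw [hze, hczi]
    _ = (↑Z * (e * ↑Z⁻¹)) * (e * e) := by noncomm_ring
    _ = (↑Z * (↑Z⁻¹ * e)) * (e * e) := by rw [hczi]
    _ = (↑Z * ↑Z⁻¹) * (e * (e * e)) := by noncomm_ring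
    _ = e := by rw [hzz, one_mul, he, he]
  · calc (e * (↑Z⁻¹ : R) * e) * (d + u) = (e * ↑Z⁻¹ * e) * (e * ↑Z) := by rw [hez]
    _ = (e * ↑Z⁻¹) * ((e * e) * ↑Z) := by noncomm_ring
    _ = (e * ↑Z⁻¹) * (e * ↑Z) := by rw [he]
    _ = (e * ↑Z⁻¹) * (↑Z * e) := by rw [hcz]
    _ = e * ((↑Z⁻¹ * ↑Z) * e) := by noncomm_ring
    _ = e := by rw [hzz', one_mul, he]

end Aux

theorem corner_isSDT {R : Type*} [Ring R] (hR : IsSDTRing R) (e : R) (he : e * e = e) :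
    @IsSDTRing {x : R // e * x * e = x} (cornerRing he) := by
  letI : Ring {x : R // e * x * e = x} := cornerRing he
  intro a
  obtain ⟨t, d, ht3, hd, hc, hat⟩ := hR a.1
  have ht' : t * t * t = t := by
    rw [pow_succ, pow_succ, pow_one] at ht3; exact ht3
  have hae : a.1 * e = a.1 := corner_right_absorb he a.2
  have hea : e * a.1 = a.1 := corner_left_absorb he a.2
  have h0r : (t + d) * (1 - e) = 0 := by
    rw [← hat, mul_sub, mul_one, hae, sub_self]
  have h0l : (1 - e) * (t + d) = 0 := by
    rw [← hat, sub_mul, one_mul, hea, sub_self]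
  have hdf : d * (1 - e) = 0 := delta_df_zero ht' hd hc h0r
  have hfd : (1 - e) * d = 0 := delta_fd_zero ht' hd hc h0l
  have hde : d * e = d := by
    rw [mul_sub, mul_one, sub_eq_zero] at hdf; exact hdf.symm
  have hed : e * d = d := by
    rw [sub_mul, one_mul, sub_eq_zero] at hfd; exact hfd.symm
  have hdmem : e * d * e = d := by rw [hed, hde]
  have htmem : e * t * e = t := by
    have h1 : t = a.1 - d := by rw [hat]; abel
    rw [h1, mul_sub, sub_mul, a.2, hdmem]
  refine ⟨⟨t, htmem⟩, ⟨d, hdmem⟩, ?_, ?_, ?_, ?_⟩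
  · have hp : (⟨t, htmem⟩ : {x : R // e * x * e = x}) ^ 3
        = ⟨t, htmem⟩ * ⟨t, htmem⟩ * ⟨t, htmem⟩ := by
      rw [pow_succ, pow_succ, pow_one]
    rw [hp]
    exact Subtype.ext ht'
  · intro u hu
    obtain ⟨U, rfl⟩ := hu
    have huv : ((U : {x : R // e * x * e = x})).1 * ((↑U⁻¹ : {x : R // e * x * e = x})).1 = e :=
      congrArg Subtype.val U.mul_inv
    have hvu : ((↑U⁻¹ : {x : R // e * x * e = x})).1 * ((U : {x : R // e * x * e = x})).1 = e :=
      congrArg Subtype.val U.inv_mul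
    obtain ⟨w, hwmem, hw1, hw2⟩ := delta_corner he hd hed hde
      ((U : {x : R // e * x * e = x})).2 ((↑U⁻¹ : {x : R // e * x * e = x})).2 huv hvu
    exact ⟨⟨⟨d, hdmem⟩ + ↑U, ⟨w, hwmem⟩, Subtype.ext hw1, Subtype.ext hw2⟩, rfl⟩
  · exact Subtype.ext hc
  · exact Subtype.ext hat
end
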